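/- arXiv:2512.21098 — 11 statements merged into one kernel-verified Lean document; each statement's English description precedes it below -/
import Mathlib

section
/- Let M be a matroid on ground set E, S ⊆ E, and I* a coindependent set of M (i.e., independent in the dual matroid M*). If B'* is a cobasis of the restriction M|S (i.e., a basis of (M|S)*), then (I* \ S) ∪ B'* is a coindependent set of M. -/
/-- If `B'` is a cobasis of the restriction `M ↾ S` (a basis of `(M ↾ S)✶`) and `I` is a
coindependent set of `M`, then `(I \ S) ∪ B'` is coindependent in `M`. -/
theorem cobasis_restriction_union_coindep {α : Type*} (M : Matroid α) [M.Finite]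
    (S : Set α) (hS : S ⊆ M.E) (I : Set α) (hI : M.Coindep I)
    (B : Set α) (hB : (M.restrict S)✶.IsBase B) :
    M.Coindep ((I \ S) ∪ B) := by
  have hBS : B ⊆ S := hB.subset_ground
  have hJ : M.IsBasis (S \ B) S := by
    have := (Matroid.dual_isBase_iff' (M := M.restrict S)).1 hB
    rw [Matroid.restrict_ground_eq] at this
    have h1 := this.1
    rwa [Matroid.isBase_restrict_iff hS] at h1
  obtain ⟨B₀, hB₀, hB₀I⟩ := hI.exists_isBase_subset_compl
  obtain ⟨B₁, hB₁, hJB₁, hB₁sub⟩ := hJ.indep.exists_isBase_subset_union_isBase hB₀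
  rw [Matroid.coindep_iff_exists (Set.union_subset ((Set.diff_subset.trans hI.subset_ground))
    (hBS.trans hS))]
  refine ⟨B₁, hB₁, fun x hx => ⟨hB₁.subset_ground hx, ?_⟩⟩
  rintro (⟨hxI, hxS⟩ | hxB)
  · rcases hB₁sub hx with h | h
    · exact hxS h.1
    · exact (hB₀I h).2 hxI
  · rcases hB₁sub hx with h | h
    · exact h.2 hxB
    · exact (hJ.insert_dep ⟨hBS hxB, fun hm => hm.2 hxB⟩).not_indep
        (hB₁.indep.subset (Set.insert_subset hx hJB₁))
end

section
/- Let M be a matroid on ground set E, S ⊆ E, and I* a coindependent set of M. Then the corank of M|S satisfies r*(M|S) ≤ r*(M) − |I* \ S|, where r* denotes the rank of the dual matroid. -/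
/-- The rank of a set `X` in a matroid `M`: the maximum cardinality of an independent
subset of `X`. -/
noncomputable def matroidRank {α : Type*} (M : Matroid α) (X : Set α) : ℕ :=
  sSup {n : ℕ | ∃ I, M.Indep I ∧ I ⊆ X ∧ I.ncard = n}

lemma coindep_union_of_restrict_coindep {α : Type*} (M : Matroid α)
    (S : Set α) (hS : S ⊆ M.E) (I : Set α) (hI : M.Coindep I)
    (J : Set α) (hJ : (M.restrict S).Coindep J) : M.Coindep (J ∪ (I \ S)) := by
  have hJS : J ⊆ S := hJ.subset_ground
  -- get a basis of S disjoint from J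
  have hsp : (M.restrict S).Spanning (S \ J) := by
    have := hJ.compl_spanning
    simpa using this
  obtain ⟨B, hB, hBsub⟩ := hsp.exists_isBase_subset
  have hBbasis : M.IsBasis B S := (Matroid.isBase_restrict_iff hS).1 hB
  set T := M.E \ (J ∪ (I \ S)) with hT
  have hTE : T ⊆ M.E := Set.diff_subset
  have hBT : B ⊆ T := by
    intro x hx
    have hxS : x ∈ S := (hBsub hx).1
    exact ⟨hS hxS, fun h => h.elim (fun h' => (hBsub hx).2 h') (fun h' => h'.2 hxS)⟩
  have hScl : S ⊆ M.closure T := by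
    calc S ⊆ M.closure S := M.subset_closure S hS
    _ = M.closure B := hBbasis.closure_eq_closure.symm
    _ ⊆ M.closure T := M.closure_subset_closure hBT
  have hEI : M.E \ I ⊆ M.closure T := by
    intro x hx
    by_cases hxS : x ∈ S
    · exact hScl hxS
    · exact M.subset_closure T hTE ⟨hx.1, fun h => h.elim (fun h' => hxS (hJS h'))
        (fun h' => hx.2 h'.1)⟩
  have hclT : M.closure T = M.E := by
    apply subset_antisymm (M.closure_subset_ground T)
    calc M.E = M.closure (M.E \ I) := hI.closure_compl.symm
    _ ⊆ M.closure (M.closure T) := M.closure_subset_closure hEI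
    _ = M.closure T := M.closure_closure T
  have hsubE : J ∪ (I \ S) ⊆ M.E :=
    Set.union_subset (hJS.trans hS) (Set.diff_subset.trans hI.subset_ground)
  rw [Matroid.coindep_iff_compl_spanning hsubE, Matroid.spanning_iff_closure_eq]
  exact hclT

/-- If `I` is a coindependent set of `M` and `S ⊆ E`, then the corank of the restriction
`M ↾ S` satisfies `r*(M|S) ≤ r*(M) - |I \ S|`. -/
theorem corank_restrict_le {α : Type*} (M : Matroid α) [M.Finite]
    (S : Set α) (hS : S ⊆ M.E) (I : Set α) (hI : M.Coindep I) :
    matroidRank (M.restrict S)✶ S ≤ matroidRank M✶ M.E - (I \ S).ncard := by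
  have hEfin : M.E.Finite := M.ground_finite
  refine csSup_le ⟨0, ∅, (M.restrict S)✶.empty_indep, Set.empty_subset _, by simp⟩ ?_
  rintro n ⟨J, hJ, hJS, rfl⟩
  apply Nat.le_sub_of_add_le
  -- J ∪ (I \ S) is coindependent in M
  have hJcd : (M.restrict S).Coindep J := hJ
  have hco : M.Coindep (J ∪ (I \ S)) := coindep_union_of_restrict_coindep M S hS I hI J hJcd
  have hJfin : J.Finite := hEfin.subset (hJS.trans hS)
  have hIfin : (I \ S).Finite := hEfin.subset (Set.diff_subset.trans hI.subset_ground)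
  have hdisj : Disjoint J (I \ S) :=
    Set.disjoint_left.2 fun x hx h => h.2 (hJS hx)
  have hcard : J.ncard + (I \ S).ncard = (J ∪ (I \ S)).ncard :=
    (Set.ncard_union_eq hdisj hJfin hIfin).symm
  rw [hcard]
  apply le_csSup
  · refine ⟨M.E.ncard, ?_⟩
    rintro m ⟨K, hK, hKE, rfl⟩
    exact Set.ncard_le_ncard hKE hEfin
  · exact ⟨J ∪ (I \ S), hco, hco.subset_ground, rfl⟩
end

section
/- Let E₁ ⊇ E₂ be finite sets and V ⊆ F^{E₁} a linear subspace. Define V_{E₂} = {x ∈ V : x_i = 0 for all i ∈ E₂}, and for a subspace W and X ⊆ E₁ let r_W(X) = dim span{x_i|_W : i ∈ X}. Then for all X ⊆ E₁ \ E₂: r_{V_{E₂}}(X) = r_V(X ∪ E₂) − r_V(E₂). -/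
/-- The `i`-th coordinate functional of `F^E`, restricted to the subspace `V`. -/
noncomputable def coordFun {F E : Type*} [Field F] (V : Submodule F (E → F)) (i : E) :
    V →ₗ[F] F :=
  (LinearMap.proj i).comp V.subtype

/-- `r_V(X)`: the dimension of the span of the coordinate functionals `x_i|_V`, `i ∈ X`. -/
noncomputable def varRank {F E : Type*} [Field F] (V : Submodule F (E → F)) (X : Set E) : ℕ :=
  Module.finrank F (Submodule.span F (coordFun V '' X))

/-!
Restriction of functionals `ρ : V^* → W^*` along `W ≤ V` sends `x_i|_V` to `x_i|_W`. Since `W` is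
cut out of `V` by the functionals `x_i|_V`, `i ∈ E₂`, the kernel of `ρ` is their span
`K = span {x_i|_V : i ∈ E₂}`. As `x_i|_W = 0` for `i ∈ E₂`, `ρ` maps `U = span {x_i|_V : i ∈ X ∪ E₂}`
onto `span {x_i|_W : i ∈ X}`, and rank–nullity for `ρ` on `U ⊇ K` gives the formula.
-/

open Module Submodule

theorem Submodule.finrank_map_add_finrank_ker_of_ker_le {K V₁ V₂ : Type*} [DivisionRing K]
    [AddCommGroup V₁] [Module K V₁] [AddCommGroup V₂] [Module K V₂] (f : V₁ →ₗ[K] V₂)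
    {U : Submodule K V₁} [FiniteDimensional K U] (h : LinearMap.ker f ≤ U) :
    finrank K (U.map f) + finrank K (LinearMap.ker f) = finrank K U := by
  have := LinearMap.finrank_range_add_finrank_ker (f.domRestrict U)
  rwa [LinearMap.range_domRestrict, LinearMap.ker_domRestrict,
    (comapSubtypeEquivOfLe h).finrank_eq] at this

section CoordFun

variable {F E : Type*} [Field F]

theorem dualMap_inclusion_coordFun {V W : Submodule F (E → F)} (hWV : W ≤ V) (i : E) :
    (inclusion hWV).dualMap (coordFun V i) = coordFun W i :=
  rfl

theorem coordFun_eq_zero {V : Submodule F (E → F)} {i : E} (h : ∀ x ∈ V, x i = 0) :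
    coordFun V i = 0 :=
  LinearMap.ext fun x => h x x.2

variable {E₂ : Set E} {V W : Submodule F (E → F)}
  (hW : ∀ x, x ∈ W ↔ x ∈ V ∧ ∀ i ∈ E₂, x i = 0)
include hW

theorem le_of_mem_iff_mem_and_zeroOn : W ≤ V :=
  fun x hx => ((hW x).1 hx).1

theorem range_inclusion_eq_dualCoannihilator_span :
    LinearMap.range (inclusion (le_of_mem_iff_mem_and_zeroOn hW)) =
      (span F (coordFun V '' E₂)).dualCoannihilator := by
  refine SetLike.coe_injective ?_
  rw [coe_dualCoannihilator_span, range_inclusion]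
  ext v
  simp [hW, v.2, coordFun]

theorem ker_dualMap_inclusion_eq_span [Finite E] :
    LinearMap.ker (inclusion (le_of_mem_iff_mem_and_zeroOn hW)).dualMap =
      span F (coordFun V '' E₂) := by
  rw [LinearMap.ker_dualMap_eq_dualAnnihilator_range, range_inclusion_eq_dualCoannihilator_span hW,
    Subspace.dualCoannihilator_dualAnnihilator_eq]

theorem map_dualMap_inclusion_span_union (X : Set E) :
    (span F (coordFun V '' (X ∪ E₂))).map (inclusion (le_of_mem_iff_mem_and_zeroOn hW)).dualMap =
      span F (coordFun W '' X) := by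
  have hzero : span F (coordFun W '' E₂) = ⊥ := by
    rw [span_eq_bot]
    rintro _ ⟨i, hi, rfl⟩
    exact coordFun_eq_zero fun x hx => ((hW x).1 hx).2 i hi
  rw [map_span, ← Set.image_comp, Set.image_union, span_union]
  simp only [Function.comp_def, dualMap_inclusion_coordFun]
  rw [hzero, sup_bot_eq]

end CoordFun

theorem varRank_zeroOn_general {F E : Type*} [Field F] [Fintype E] (E₂ : Set E)
    (V W : Submodule F (E → F)) (hW : ∀ x, x ∈ W ↔ x ∈ V ∧ ∀ i ∈ E₂, x i = 0)
    (X : Set E) :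
    varRank W X = varRank V (X ∪ E₂) - varRank V E₂ := by
  have hker := ker_dualMap_inclusion_eq_span hW
  have rank_nullity := finrank_map_add_finrank_ker_of_ker_le
    (U := span F (coordFun V '' (X ∪ E₂))) (inclusion (le_of_mem_iff_mem_and_zeroOn hW)).dualMap
    (hker ▸ span_mono (Set.image_mono Set.subset_union_right))
  rw [map_dualMap_inclusion_span_union hW, hker] at rank_nullity
  exact (Nat.sub_eq_of_eq_add rank_nullity.symm).symm

/-- Let `E₂ ⊆ E₁`, `V ⊆ F^{E₁}` a subspace and `W = V_{E₂} = {x ∈ V : x_i = 0 ∀ i ∈ E₂}`.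
Then for all `X ⊆ E₁ \ E₂`: `r_{V_{E₂}}(X) = r_V(X ∪ E₂) − r_V(E₂)`. -/
theorem varRank_zeroOn {F E : Type*} [Field F] [Fintype E] (E₂ : Set E)
    (V W : Submodule F (E → F)) (hW : ∀ x, x ∈ W ↔ x ∈ V ∧ ∀ i ∈ E₂, x i = 0)
    (X : Set E) (hX : X ⊆ E₂ᶜ) :
    varRank W X = varRank V (X ∪ E₂) - varRank V E₂ :=
  varRank_zeroOn_general E₂ V W hW X
end

section
/- Let K = {x ∈ F^E : A x = b} be a nonempty solution set of a linear system, where A ∈ M_{m×E}(F) and b ∈ F^m, and let V = {x : A x = 0} be the associated subspace. Then for all X ⊆ E: rank(A restricted to columns X) + dim span{x_i|_V : i ∈ E} = |X| + dim span{x_i|_V : i ∈ E \ X}. In particular, the vector matroid of A (on column set E) is the dual of the matroid of K defined by the rank function X ↦ dim span{x_i|_V : i ∈ X}. -/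
/-- `M` is the matroid `M(K)` of a linear variety with associated subspace `V`:
its ground set is all of `E` and a set is independent iff the corresponding coordinate
functionals restricted to `V` are linearly independent. -/
def IsVarietyMatroidOf {F E : Type*} [Field F] (V : Submodule F (E → F)) (M : Matroid E) :
    Prop :=
  M.E = Set.univ ∧ ∀ X : Set E, M.Indep X ↔ LinearIndependent F (fun i : X => coordFun V i)

/-- `N` is the vector matroid `M[A]` of the matrix `A` on its column set `E`:
its ground set is all of `E` and a set of columns is independent iff those columns of `A`
are linearly independent. -/
def IsVectorMatroidOf {F E : Type*} [Field F] {m : ℕ} (A : Matrix (Fin m) E F)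
    (N : Matroid E) : Prop :=
  N.E = Set.univ ∧
    ∀ X : Set E, N.Indep X ↔ LinearIndependent F (fun j : X => fun i => A i (j : E))

section Aux

open Set Submodule Module

variable {F E : Type*} [Field F]

/-- The submodule of vectors supported on `X`. -/
def suppSub (F : Type*) {E : Type*} [Field F] (X : Set E) : Submodule F (E → F) where
  carrier := {x | ∀ j ∉ X, x j = 0}
  add_mem' := by intro a b ha hb j hj; simp [ha j hj, hb j hj]
  zero_mem' := by intro j hj; rfl
  smul_mem' := by intro c x hx j hj; simp [hx j hj]

open scoped Classical in
/-- Extension by zero as a linear map. -/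
noncomputable def extZero (F : Type*) [Field F] {E : Type*} (X : Set E) :
    (X → F) →ₗ[F] (E → F) where
  toFun c j := if h : j ∈ X then c ⟨j, h⟩ else 0
  map_add' a b := by ext j; by_cases h : j ∈ X <;> simp [h]
  map_smul' c a := by ext j; by_cases h : j ∈ X <;> simp [h]

lemma suppSub_empty : suppSub F (∅ : Set E) = ⊥ := by
  ext x
  simp only [Submodule.mem_bot]
  constructor
  · intro h; funext j; exact h j (by simp)
  · rintro rfl j -; rfl

variable [Fintype E]

lemma sum_subtype_of_supp {X : Set E} [Fintype X] {f : E → F} (hf : ∀ j ∉ X, f j = 0) :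
    ∑ j : X, f ↑j = ∑ j : E, f j := by
  classical
  rw [show (∑ j : X, f ↑j) = ∑ j ∈ X.toFinset, f j from
    (Finset.sum_subtype _ (by simp) f).symm]
  exact Finset.sum_subset (Finset.subset_univ _) (fun j _ hj => hf j (by simpa using hj))

/-- Lemma A: column rank plus the dimension of the part of `V` supported in `X` is `|X|`. -/
lemma lemA {m : ℕ} (A : Matrix (Fin m) E F) (V : Submodule F (E → F))
    (hV : ∀ x, x ∈ V ↔ A.mulVec x = 0) (X : Set E) :
    Module.finrank F (Submodule.span F ((fun j => fun i => A i j) '' X))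
      + Module.finrank F (V ⊓ suppSub F X : Submodule F (E → F)) = X.ncard := by
  classical
  haveI : Fintype X := X.toFinite.fintype
  set B : Matrix (Fin m) X F := A.submatrix id (Subtype.val) with hB
  have himg : ((fun j => fun i => A i j) '' X) = Set.range B.transpose := by
    rw [Set.image_eq_range]; rfl
  have hspan : Submodule.span F ((fun j => fun i => A i j) '' X)
      = LinearMap.range B.mulVecLin := by
    rw [himg, Matrix.range_mulVecLin]
    rfl
  have hmv : ∀ c : X → F, A.mulVec (extZero F X c) = B.mulVec c := by
    intro c
    ext i
    simp only [Matrix.mulVec, dotProduct]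
    rw [← sum_subtype_of_supp (X := X) (f := fun j => A i j * (extZero F X c) j)]
    · refine Finset.sum_congr rfl fun j _ => ?_
      simp [extZero, hB]
    · intro j hj; simp [extZero, hj]
  have hmv' : ∀ x : E → F, x ∈ suppSub F X →
      B.mulVec (fun j : X => x ↑j) = A.mulVec x := by
    intro x hx
    ext i
    simp only [Matrix.mulVec, dotProduct]
    rw [← sum_subtype_of_supp (X := X) (f := fun j => A i j * x j)]
    · rfl
    · intro j hj; simp [hx j hj]
  have e : (LinearMap.ker B.mulVecLin) ≃ₗ[F] (V ⊓ suppSub F X : Submodule F (E → F)) := by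
    refine LinearEquiv.ofLinear
      (LinearMap.codRestrict _ ((extZero F X).comp (LinearMap.ker B.mulVecLin).subtype) ?_)
      (LinearMap.codRestrict _
        ((LinearMap.funLeft F F (Subtype.val : X → E)).comp
          (V ⊓ suppSub F X : Submodule F (E → F)).subtype) ?_) ?_ ?_
    · intro c
      refine Submodule.mem_inf.2 ⟨(hV _).2 ?_, fun j hj => ?_⟩
      · rw [LinearMap.comp_apply, Submodule.coe_subtype, hmv]
        exact LinearMap.mem_ker.mp c.2
      · simp [extZero, hj]
    · intro x
      have hx2 : (x : E → F) ∈ suppSub F X := (Submodule.mem_inf.1 x.2).2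
      have hx1 : (x : E → F) ∈ V := (Submodule.mem_inf.1 x.2).1
      simp only [LinearMap.mem_ker, LinearMap.comp_apply, Submodule.coe_subtype]
      rw [Matrix.mulVecLin_apply]
      rw [show (LinearMap.funLeft F F (Subtype.val : X → E)) (x : E → F)
        = fun j : X => (x : E → F) ↑j from rfl, hmv' _ hx2, (hV _).1 hx1]
    · ext x j
      simp only [LinearMap.comp_apply, LinearMap.codRestrict_apply, Submodule.coe_subtype,
        LinearMap.id_coe, id_eq]
      by_cases h : j ∈ X
      · simp [extZero, LinearMap.funLeft, h]
      · have hx2 : (x : E → F) ∈ suppSub F X := (Submodule.mem_inf.1 x.2).2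
        simp [extZero, h, hx2 j h]
    · ext c j
      simp [extZero, LinearMap.funLeft]
  have hrn := LinearMap.finrank_range_add_finrank_ker B.mulVecLin
  rw [hspan, e.symm.finrank_eq.symm] at *
  have hcard : Module.finrank F (X → F) = X.ncard := by
    rw [Module.finrank_pi, Set.ncard_eq_toFinset_card', Set.toFinset_card]
  omega

/-- Lemma B : `varRank Y + dim (V ⊓ suppSub Yᶜ) = dim V`. -/
lemma lemB (V : Submodule F (E → F)) (Y : Set E) :
    varRank V Y + Module.finrank F (V ⊓ suppSub F Yᶜ : Submodule F (E → F))
      = Module.finrank F V := by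
  classical
  haveI : Fintype Y := Y.toFinite.fintype
  set Φ : V →ₗ[F] (Y → F) := LinearMap.pi (fun i : Y => coordFun V ↑i) with hΦ
  have hker : LinearMap.ker Φ = Submodule.comap V.subtype
      (V ⊓ suppSub F Yᶜ : Submodule F (E → F)) := by
    ext v
    simp only [LinearMap.mem_ker, Submodule.mem_comap, Submodule.mem_inf]
    constructor
    · intro h
      refine ⟨v.2, fun j hj => ?_⟩
      have hj' : j ∈ Y := by simpa using hj
      exact congrFun h ⟨j, hj'⟩
    · rintro ⟨-, h⟩
      ext i
      exact h i (by simp)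
  have hkerrank : Module.finrank F (LinearMap.ker Φ)
      = Module.finrank F (V ⊓ suppSub F Yᶜ : Submodule F (E → F)) := by
    rw [hker]
    exact (Submodule.comapSubtypeEquivOfLe inf_le_left).finrank_eq
  have hdual : LinearMap.range Φ.dualMap = Submodule.span F (coordFun V '' Y) := by
    have hb : Submodule.span F (Set.range (Pi.basisFun F Y).dualBasis) = ⊤ :=
      Basis.span_eq _
    rw [LinearMap.range_eq_map, ← hb, Submodule.map_span, ← Set.range_comp]
    congr 1
    rw [Set.image_eq_range]
    have heq : ⇑Φ.dualMap ∘ ⇑(Pi.basisFun F ↑Y).dualBasis = fun i : Y => coordFun V ↑i := by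
      funext i
      ext v
      rw [Function.comp_apply, LinearMap.dualMap_apply, Basis.coe_dualBasis,
        Basis.coord_apply, Pi.basisFun_repr]
      rfl
    rw [heq]
  have hrk : Module.finrank F (LinearMap.range Φ) = varRank V Y := by
    rw [varRank, ← hdual, LinearMap.finrank_range_dualMap_eq_finrank_range]
  have := LinearMap.finrank_range_add_finrank_ker Φ
  rw [hrk, hkerrank] at this
  simpa using this

lemma indep_iff_card_eq {W : Type*} [AddCommGroup W] [Module F W] (f : E → W) (X : Set E) :
    LinearIndependent F (fun i : X => f i) ↔
      Module.finrank F (Submodule.span F (f '' X)) = X.ncard := by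
  classical
  haveI : Fintype X := X.toFinite.fintype
  rw [linearIndependent_iff_card_eq_finrank_span, Set.finrank, ← Set.image_eq_range,
    Set.ncard_eq_toFinset_card', Set.toFinset_card, eq_comm]

lemma basis_span (V : Submodule F (E → F)) (M : Matroid E)
    (hInd : ∀ X : Set E, M.Indep X ↔ LinearIndependent F (fun i : X => coordFun V i))
    {I S : Set E} (hB : M.IsBasis I S) :
    Submodule.span F (coordFun V '' I) = Submodule.span F (coordFun V '' S) := by
  refine le_antisymm (Submodule.span_mono (Set.image_mono hB.subset)) ?_
  rw [Submodule.span_le]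
  rintro - ⟨j, hjS, rfl⟩
  by_cases hjI : j ∈ I
  · exact Submodule.subset_span ⟨j, hjI, rfl⟩
  by_contra h
  have hins : LinearIndependent F (fun i : (insert j I : Set E) => coordFun V i) :=
    (linearIndepOn_insert (f := coordFun V) hjI).2 ⟨(hInd I).1 hB.indep, h⟩
  exact (hB.insert_dep ⟨hjS, hjI⟩).not_indep ((hInd _).2 hins)

lemma spanning_iff_span (V : Submodule F (E → F)) (M : Matroid E) (hE : M.E = Set.univ)
    (hInd : ∀ X : Set E, M.Indep X ↔ LinearIndependent F (fun i : X => coordFun V i))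
    (S : Set E) :
    M.Spanning S ↔
      Submodule.span F (coordFun V '' S) = Submodule.span F (coordFun V '' Set.univ) := by
  constructor
  · intro hS
    obtain ⟨B, hB, hBS⟩ := hS.exists_isBase_subset
    have hBg : M.IsBasis B Set.univ := hE ▸ hB.isBasis_ground
    have h1 := basis_span V M hInd hBg
    refine le_antisymm ?_ ?_
    · exact Submodule.span_mono (Set.image_mono (Set.subset_univ _))
    · exact h1 ▸ Submodule.span_mono (Set.image_mono hBS)
  · intro hsp
    have hSE : S ⊆ M.E := hE ▸ Set.subset_univ _
    obtain ⟨I, hI⟩ := M.exists_isBasis S hSE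
    have hspI : Submodule.span F (coordFun V '' I)
        = Submodule.span F (coordFun V '' Set.univ) := by
      rw [basis_span V M hInd hI, hsp]
    have hbase : M.IsBase I := by
      rw [Matroid.isBase_iff_maximal_indep]
      refine ⟨hI.indep, fun J hJ hIJ => ?_⟩
      intro j hjJ
      by_contra hjI
      have hins : M.Indep (insert j I) := hJ.subset (Set.insert_subset hjJ hIJ)
      have := ((linearIndepOn_insert (f := coordFun V) hjI).1 ((hInd _).1 hins)).2
      exact this (hspI ▸ Submodule.subset_span ⟨j, Set.mem_univ j, rfl⟩)
    exact hbase.spanning_of_superset hI.subset hSE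

end Aux

/-- Let `K = {x : Ax = b}` be nonempty and `V = {x : Ax = 0}`. Then for all `X ⊆ E`,
`rank(A on columns X) + dim span{x_i|_V : i ∈ E} = |X| + dim span{x_i|_V : i ∈ E \ X}`;
in particular the vector matroid of `A` is the dual of the matroid of `K`. -/
theorem vectorMatroid_dual_varietyMatroid {F E : Type*} [Field F] [Fintype E] {m : ℕ}
    (A : Matrix (Fin m) E F) (b : Fin m → F)
    (hne : {x : E → F | A.mulVec x = b}.Nonempty)
    (V : Submodule F (E → F)) (hV : ∀ x, x ∈ V ↔ A.mulVec x = 0)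
    (MA MK : Matroid E) (hMA : IsVectorMatroidOf A MA) (hMK : IsVarietyMatroidOf V MK) :
    (∀ X : Set E,
        Module.finrank F (Submodule.span F ((fun j => fun i => A i j) '' X))
            + varRank V Set.univ
          = X.ncard + varRank V (Set.univ \ X)) ∧
      MA = MK✶ := by
  have hbotu : Module.finrank F
      (V ⊓ suppSub F ((Set.univ : Set E)ᶜ) : Submodule F (E → F)) = 0 := by
    rw [Set.compl_univ, suppSub_empty, inf_bot_eq, finrank_bot]
  have hBuniv : varRank V (Set.univ : Set E) = Module.finrank F V := by
    have := lemB V (Set.univ : Set E)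
    rwa [hbotu, add_zero] at this
  have hdiff : ∀ X : Set E, Set.univ \ X = Xᶜ := fun X => (Set.compl_eq_univ_diff X).symm
  have key : ∀ X : Set E,
      varRank V (Set.univ \ X) + Module.finrank F (V ⊓ suppSub F X : Submodule F (E → F))
        = Module.finrank F V := by
    intro X
    have := lemB V Xᶜ
    rwa [compl_compl, ← hdiff] at this
  constructor
  · intro X
    have hA := lemA A V hV X
    have hK := key X
    omega
  · refine Matroid.ext_indep ?_ fun ⦃I⦄ _ => ?_
    · rw [Matroid.dual_ground, hMA.1, hMK.1]
    · have hIA : MA.Indep I ↔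
          Module.finrank F (V ⊓ suppSub F I : Submodule F (E → F)) = 0 := by
        rw [hMA.2 I,
          show (LinearIndependent F fun (j : ↑I) i => A i ↑j) ↔ _ from
            indep_iff_card_eq (fun j => fun i => A i j) I]
        have := lemA A V hV I
        omega
      have hIK : MK✶.Indep I ↔
          Module.finrank F (V ⊓ suppSub F I : Submodule F (E → F)) = 0 := by
        rw [← Matroid.coindep_def,
          Matroid.coindep_iff_compl_spanning (hMK.1 ▸ Set.subset_univ I), hMK.1,
          spanning_iff_span V MK hMK.1 hMK.2]
        constructor
        · intro h
          have h' : varRank V (Set.univ \ I) = varRank V Set.univ := by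
            rw [varRank, varRank, h]
          have := key I
          omega
        · intro h
          have h' : varRank V (Set.univ \ I) = varRank V Set.univ := by
            have := key I
            omega
          refine Submodule.eq_of_le_of_finrank_eq
            (Submodule.span_mono (Set.image_mono (Set.subset_univ _))) ?_
          exact h'
      rw [hIA, hIK]
end

section
/- Let n > k ≥ 1 and X ∈ M_{n×k}(F). Append to X an extra column of all ones to get Y ∈ M_{n×(k+1)}. Then det_{n,k+1}(Y) = det_{n,k}(X) if n + k is odd, and det_{n,k+1}(Y) = 0 if n + k is even. -/
open Finset

/-- The Cullis determinant of an n × k matrix: the alternating sum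
Σ_c sgn(c) · det(X[c]) over k-element subsets c of the rows, where
sgn(c) = (−1)^{Σ_α (c(α) − α)}. -/
noncomputable def cullisDet {R : Type*} [CommRing R] {n k : ℕ}
    (X : Matrix (Fin n) (Fin k) R) : R :=
  ∑ c : {s : Finset (Fin n) // s.card = k},
    (-1 : R) ^ (∑ α : Fin k, ((c.1.orderEmbOfFin c.2 α : ℕ) - (α : ℕ))) *
      (X.submatrix (⇑(c.1.orderEmbOfFin c.2)) id).det

lemma neg_one_pow_congr' {R : Type*} [Ring R] {a b : ℕ}
    (h : a % 2 = b % 2) : (-1 : R)^a = (-1)^b := by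
  rw [neg_one_pow_eq_pow_mod_two, h, ← neg_one_pow_eq_pow_mod_two]

lemma card_filter_lt_orderEmbOfFin {n k : ℕ} (c : Finset (Fin n)) (h : c.card = k) (i : Fin k) :
    (c.filter (fun x => x < c.orderEmbOfFin h i)).card = i := by
  have key : c.filter (fun x => x < c.orderEmbOfFin h i)
      = (univ.filter (fun j : Fin k => j < i)).image (c.orderEmbOfFin h) := by
    ext x
    simp only [mem_filter, mem_image, mem_univ, true_and]
    constructor
    · rintro ⟨hx, hlt⟩
      have : x ∈ Set.range (c.orderEmbOfFin h) := by
        rw [Finset.range_orderEmbOfFin]; exact hx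
      obtain ⟨j, rfl⟩ := this
      exact ⟨j, (OrderEmbedding.lt_iff_lt _).1 hlt, rfl⟩
    · rintro ⟨j, hj, rfl⟩
      exact ⟨Finset.orderEmbOfFin_mem _ _ _, (OrderEmbedding.lt_iff_lt _).2 hj⟩
  rw [key, card_image_of_injective _ (c.orderEmbOfFin h).injective,
    show (univ.filter (fun j : Fin k => j < i)) = Iio i from (by ext; simp), Fin.card_Iio]

lemma le_orderEmbOfFin {n k : ℕ} (c : Finset (Fin n)) (h : c.card = k) (i : Fin k) :
    (i : ℕ) ≤ (c.orderEmbOfFin h i : ℕ) := by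
  rw [← card_filter_lt_orderEmbOfFin c h i]
  calc (c.filter (fun x => x < c.orderEmbOfFin h i)).card
      ≤ (Iio (c.orderEmbOfFin h i)).card :=
        card_le_card (fun x hx => by simp_all [mem_filter])
    _ = _ := Fin.card_Iio _

lemma sum_comp_orderEmbOfFin {n k : ℕ} {M : Type*} [AddCommMonoid M]
    (c : Finset (Fin n)) (h : c.card = k) (f : Fin n → M) :
    ∑ α : Fin k, f (c.orderEmbOfFin h α) = ∑ x ∈ c, f x := by
  apply Finset.sum_bij (fun α _ => c.orderEmbOfFin h α)
  · intro α _; exact Finset.orderEmbOfFin_mem _ _ _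
  · intro a _ b _ hab; exact (c.orderEmbOfFin h).injective hab
  · intro x hx
    have : x ∈ Set.range (c.orderEmbOfFin h) := by
      rw [Finset.range_orderEmbOfFin]; exact hx
    obtain ⟨j, rfl⟩ := this
    exact ⟨j, mem_univ _, rfl⟩
  · intros; rfl

lemma sign_eq {n k : ℕ} {R : Type*} [CommRing R] (c : Finset (Fin n)) (h : c.card = k) :
    (-1 : R) ^ (∑ α : Fin k, ((c.orderEmbOfFin h α : ℕ) - (α : ℕ)))
      = (-1) ^ (∑ x ∈ c, (x : ℕ) + ∑ α : Fin k, (α : ℕ)) := by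
  apply neg_one_pow_congr'
  have : (∑ α : Fin k, ((c.orderEmbOfFin h α : ℕ) - (α : ℕ))) + ∑ α : Fin k, (α : ℕ)
      = ∑ x ∈ c, (x : ℕ) := by
    rw [← Finset.sum_add_distrib, ← sum_comp_orderEmbOfFin c h (fun x => (x : ℕ))]
    exact Finset.sum_congr rfl fun α _ => Nat.sub_add_cancel (le_orderEmbOfFin c h α)
  omega

lemma erase_card_aux {n k : ℕ} (c : Finset (Fin n)) (hc : c.card = k + 1) (i : Fin (k+1)) :
    (c.erase (c.orderEmbOfFin hc i)).card = k := by
  rw [card_erase_of_mem (Finset.orderEmbOfFin_mem _ _ _), hc]; rfl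

lemma erase_orderEmbOfFin {n k : ℕ} (c : Finset (Fin n)) (hc : c.card = k + 1) (i : Fin (k+1)) :
    (c.orderEmbOfFin hc) ∘ i.succAbove
      = (c.erase (c.orderEmbOfFin hc i)).orderEmbOfFin (erase_card_aux c hc i) := by
  apply Finset.orderEmbOfFin_unique
  · intro x
    refine mem_erase.2 ⟨fun h => ?_, Finset.orderEmbOfFin_mem _ _ _⟩
    exact Fin.succAbove_ne i x ((c.orderEmbOfFin hc).injective h)
  · exact (c.orderEmbOfFin hc).strictMono.comp (Fin.strictMono_succAbove i)

lemma det_expand {F : Type*} [Field F] {n k : ℕ} (X : Matrix (Fin n) (Fin k) F)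
    (c : Finset (Fin n)) (hc : c.card = k + 1) :
    ((Matrix.of fun i (j : Fin (k + 1)) =>
        if hj : (j : ℕ) < k then X i ⟨j, hj⟩ else 1).submatrix (c.orderEmbOfFin hc) id).det
    = ∑ i : Fin (k+1), (-1 : F) ^ ((i : ℕ) + k) *
        (X.submatrix ((c.erase (c.orderEmbOfFin hc i)).orderEmbOfFin (erase_card_aux c hc i))
          id).det := by
  rw [Matrix.det_succ_column _ (Fin.last k)]
  apply Finset.sum_congr rfl
  intro i _
  rw [← erase_orderEmbOfFin]
  have h1 : ((Matrix.of fun i (j : Fin (k + 1)) =>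
      if hj : (j : ℕ) < k then X i ⟨j, hj⟩ else 1).submatrix (c.orderEmbOfFin hc) id)
        i (Fin.last k) = 1 := by
    simp [Matrix.submatrix_apply]
  rw [h1, mul_one, Fin.val_last, Fin.succAbove_last, Matrix.submatrix_submatrix]
  congr 2
  ext a b
  simp only [Matrix.submatrix_apply, Function.comp_apply, Matrix.of_apply, id]
  rw [dif_pos (by simpa using b.isLt)]
  exact congrArg _ (Fin.ext (by simp))

lemma filter_lt_partition {n : ℕ} (d : Finset (Fin n)) (m : Fin n) :
    (d.filter (fun x => x < m)).card + (dᶜ.filter (fun x => x < m)).card = (m : ℕ) := by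
  classical
  have hdisj : Disjoint (d.filter (fun x => x < m)) (dᶜ.filter (fun x => x < m)) :=
    Finset.disjoint_filter_filter disjoint_compl_right
  have hu : d.filter (fun x => x < m) ∪ dᶜ.filter (fun x => x < m) = Iio m := by
    ext x
    simp only [mem_union, mem_filter, mem_compl, mem_Iio]
    tauto
  rw [← card_union_of_disjoint hdisj, hu, Fin.card_Iio]

lemma T_eq {F : Type*} [Field F] {n k : ℕ} (hkn : k ≤ n) (d : Finset (Fin n))
    (hd : d.card = k) :
    ∑ m : {m : Fin n // m ∉ d}, (-1 : F) ^ ((m.1 : ℕ) + (d.filter (fun x => x < m.1)).card)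
      = if Odd (n + k) then 1 else 0 := by
  classical
  have hc : dᶜ.card = n - k := by rw [card_compl, hd, Fintype.card_fin]
  have hsub : ∑ m : {m : Fin n // m ∉ d},
        (-1 : F) ^ ((m.1 : ℕ) + (d.filter (fun x => x < m.1)).card)
      = ∑ m ∈ dᶜ, (-1 : F) ^ ((m : ℕ) + (d.filter (fun x => x < m)).card) :=
    (Finset.sum_subtype dᶜ (fun x => Finset.mem_compl)
      (fun m => (-1 : F) ^ ((m : ℕ) + (d.filter (fun x => x < m)).card))).symm
  rw [hsub, ← sum_comp_orderEmbOfFin dᶜ hc]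
  have key : ∀ t : Fin (n - k),
      (((dᶜ.orderEmbOfFin hc t : Fin n) : ℕ)
        + (d.filter (fun x => x < dᶜ.orderEmbOfFin hc t)).card) % 2 = (t : ℕ) % 2 := by
    intro t
    have h1 := card_filter_lt_orderEmbOfFin dᶜ hc t
    have h2 := filter_lt_partition d (dᶜ.orderEmbOfFin hc t)
    omega
  calc ∑ t : Fin (n - k), (-1 : F) ^ (((dᶜ.orderEmbOfFin hc t : Fin n) : ℕ)
        + (d.filter (fun x => x < dᶜ.orderEmbOfFin hc t)).card)
      = ∑ t : Fin (n - k), (-1 : F) ^ (t : ℕ) :=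
        Finset.sum_congr rfl (fun t _ => neg_one_pow_congr' (key t))
    _ = ∑ i ∈ Finset.range (n - k), (-1 : F) ^ i := Fin.sum_univ_eq_sum_range _ _
    _ = if Even (n - k) then 0 else 1 := neg_one_geom_sum
    _ = if Odd (n + k) then 1 else 0 := by
        rcases Nat.even_or_odd (n - k) with h | h
        · rw [if_pos h, if_neg]
          rw [Nat.even_iff] at h
          rw [Nat.odd_iff]
          omega
        · rw [if_neg (Nat.not_even_iff_odd.2 h), if_pos]
          rw [Nat.odd_iff] at h ⊢
          omega

def Phi (n k : ℕ) :
    (Σ _c : {s : Finset (Fin n) // s.card = k + 1}, Fin (k + 1)) →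
      (Σ d : {s : Finset (Fin n) // s.card = k}, {m : Fin n // m ∉ d.1}) := fun p =>
  ⟨⟨p.1.1.erase (p.1.1.orderEmbOfFin p.1.2 p.2), erase_card_aux _ _ _⟩,
   ⟨p.1.1.orderEmbOfFin p.1.2 p.2, notMem_erase _ _⟩⟩

lemma Phi_bijective (n k : ℕ) : Function.Bijective (Phi n k) := by
  classical
  rw [Fintype.bijective_iff_injective_and_card]
  constructor
  · rintro ⟨⟨c, hc⟩, i⟩ ⟨⟨c', hc'⟩, i'⟩ h
    have hm : (c.orderEmbOfFin hc i : Fin n) = c'.orderEmbOfFin hc' i' :=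
      congrArg (fun q => q.2.1) h
    have hd : c.erase (c.orderEmbOfFin hc i) = c'.erase (c'.orderEmbOfFin hc' i') :=
      congrArg (fun q => q.1.1) h
    have hcc : c = c' := by
      rw [← insert_erase (Finset.orderEmbOfFin_mem c hc i), hd, hm,
        insert_erase (Finset.orderEmbOfFin_mem c' hc' i')]
    subst hcc
    have hi : i = i' := (c.orderEmbOfFin hc).injective hm
    subst hi
    rfl
  · rw [Fintype.card_sigma, Fintype.card_sigma]
    have h1 : ∀ c : {s : Finset (Fin n) // s.card = k + 1},
        Fintype.card (Fin (k + 1)) = k + 1 := fun _ => Fintype.card_fin _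
    have h2 : ∀ d : {s : Finset (Fin n) // s.card = k},
        Fintype.card {m : Fin n // m ∉ d.1} = n - k := by
      intro d
      rw [Fintype.card_subtype_compl]
      rw [Fintype.card_fin]
      congr 1
      rw [Fintype.card_coe, d.2]
    rw [Finset.sum_congr rfl (fun c _ => h1 c), Finset.sum_congr rfl (fun d _ => h2 d),
      Finset.sum_const, Finset.sum_const, smul_eq_mul, smul_eq_mul, card_univ, card_univ,
      Fintype.card_finset_len, Fintype.card_finset_len, Fintype.card_fin]
    exact Nat.choose_succ_right_eq n k

noncomputable def fA {F : Type*} [Field F] {n k : ℕ} (X : Matrix (Fin n) (Fin k) F)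
    (p : Σ _c : {s : Finset (Fin n) // s.card = k + 1}, Fin (k + 1)) : F :=
  (-1) ^ (∑ α : Fin (k + 1), ((p.1.1.orderEmbOfFin p.1.2 α : ℕ) - (α : ℕ))) *
    ((-1) ^ ((p.2 : ℕ) + k) *
      (X.submatrix ((p.1.1.erase (p.1.1.orderEmbOfFin p.1.2 p.2)).orderEmbOfFin
        (erase_card_aux _ _ _)) id).det)

noncomputable def gB {F : Type*} [Field F] {n k : ℕ} (X : Matrix (Fin n) (Fin k) F)
    (q : Σ d : {s : Finset (Fin n) // s.card = k}, {m : Fin n // m ∉ d.1}) : F :=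
  (-1) ^ (∑ x ∈ q.1.1, (x : ℕ) + ∑ α : Fin k, (α : ℕ)) *
    ((-1) ^ ((q.2.1 : ℕ) + (q.1.1.filter (fun x => x < q.2.1)).card) *
      (X.submatrix (q.1.1.orderEmbOfFin q.1.2) id).det)

lemma fA_eq_gB {F : Type*} [Field F] {n k : ℕ} (X : Matrix (Fin n) (Fin k) F)
    (p : Σ _c : {s : Finset (Fin n) // s.card = k + 1}, Fin (k + 1)) :
    fA X p = gB X (Phi n k p) := by
  obtain ⟨⟨c, hc⟩, i⟩ := p
  set m := c.orderEmbOfFin hc i with hm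
  set d := c.erase m with hdd
  have hcard : d.card = k := erase_card_aux c hc i
  show (-1) ^ (∑ α : Fin (k + 1), ((c.orderEmbOfFin hc α : ℕ) - (α : ℕ))) *
      ((-1) ^ ((i : ℕ) + k) * (X.submatrix (d.orderEmbOfFin (erase_card_aux _ _ _)) id).det)
    = (-1) ^ (∑ x ∈ d, (x : ℕ) + ∑ α : Fin k, (α : ℕ)) *
      ((-1) ^ ((m : ℕ) + (d.filter (fun x => x < m)).card) *
        (X.submatrix (d.orderEmbOfFin (erase_card_aux _ _ _)) id).det)
  rw [sign_eq c hc, ← mul_assoc, ← mul_assoc, ← pow_add, ← pow_add]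
  congr 1
  apply neg_one_pow_congr'
  have hsum : ∑ x ∈ d, (x : ℕ) + (m : ℕ) = ∑ x ∈ c, (x : ℕ) :=
    Finset.sum_erase_add c _ (Finset.orderEmbOfFin_mem c hc i)
  have hα : ∑ α : Fin (k + 1), (α : ℕ) = ∑ α : Fin k, (α : ℕ) + k := by
    rw [Fin.sum_univ_castSucc]; simp
  have hcnt : (d.filter (fun x => x < m)).card = (i : ℕ) := by
    have hfe : d.filter (fun x => x < m) = c.filter (fun x => x < m) := by
      ext x
      simp only [hdd, mem_filter, mem_erase]
      constructor
      · rintro ⟨⟨_, hx⟩, hlt⟩; exact ⟨hx, hlt⟩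
      · rintro ⟨hx, hlt⟩; exact ⟨⟨ne_of_lt hlt, hx⟩, hlt⟩
    rw [hfe, hm, card_filter_lt_orderEmbOfFin c hc i]
  omega

lemma sum_gB {F : Type*} [Field F] {n k : ℕ} (hkn : k ≤ n) (X : Matrix (Fin n) (Fin k) F) :
    ∑ q : Σ d : {s : Finset (Fin n) // s.card = k}, {m : Fin n // m ∉ d.1}, gB X q
      = if Odd (n + k) then cullisDet X else 0 := by
  classical
  rw [← Finset.univ_sigma_univ, Finset.sum_sigma]
  have hstep : ∀ d : {s : Finset (Fin n) // s.card = k},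
      ∑ m : {m : Fin n // m ∉ d.1}, gB X ⟨d, m⟩
        = (-1 : F) ^ (∑ x ∈ d.1, (x : ℕ) + ∑ α : Fin k, (α : ℕ)) *
          ((if Odd (n + k) then (1 : F) else 0) *
            (X.submatrix (d.1.orderEmbOfFin d.2) id).det) := by
    intro d
    rw [show (∑ m : {m : Fin n // m ∉ d.1}, gB X ⟨d, m⟩) =
        (-1 : F) ^ (∑ x ∈ d.1, (x : ℕ) + ∑ α : Fin k, (α : ℕ)) *
          ((∑ m : {m : Fin n // m ∉ d.1},
              (-1 : F) ^ ((m.1 : ℕ) + (d.1.filter (fun x => x < m.1)).card)) *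
            (X.submatrix (d.1.orderEmbOfFin d.2) id).det) from by
      rw [Finset.sum_mul, Finset.mul_sum]; rfl]
    rw [T_eq hkn d.1 d.2]
  rw [Finset.sum_congr rfl (fun d _ => hstep d)]
  by_cases ho : Odd (n + k)
  · rw [if_pos ho, if_pos ho]
    rw [cullisDet]
    apply Finset.sum_congr rfl
    intro d _
    rw [sign_eq d.1 d.2, one_mul]
  · rw [if_neg ho, if_neg ho]
    simp

/-- Appending a column of all ones to X gives Y with det_{n,k+1}(Y) = det_{n,k}(X)
if n + k is odd, and det_{n,k+1}(Y) = 0 if n + k is even. -/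
theorem cullisDet_append_ones {F : Type*} [Field F] {n k : ℕ} (hk : 1 ≤ k) (hkn : k < n)
    (X : Matrix (Fin n) (Fin k) F) :
    cullisDet (Matrix.of fun i (j : Fin (k + 1)) =>
        if hj : (j : ℕ) < k then X i ⟨j, hj⟩ else 1)
      = if Odd (n + k) then cullisDet X else 0 := by
  classical
  have h1 : cullisDet (Matrix.of fun i (j : Fin (k + 1)) =>
      if hj : (j : ℕ) < k then X i ⟨j, hj⟩ else 1)
      = ∑ p : Σ _c : {s : Finset (Fin n) // s.card = k + 1}, Fin (k + 1), fA X p := by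
    rw [cullisDet, ← Finset.univ_sigma_univ, Finset.sum_sigma]
    apply Finset.sum_congr rfl
    intro c _
    rw [det_expand X c.1 c.2, Finset.mul_sum]
    rfl
  rw [h1, Fintype.sum_bijective (Phi n k) (Phi_bijective n k) _ _ (fA_eq_gB X),
    sum_gB (le_of_lt hkn) X]
end

section
/- Let 1 < k ≤ n and X ∈ M_{n×k}(F). Then for any column index j, det_{n,k}(X) = Σ_{i=1}^{n} (−1)^{i+j} x_{ij} · det_{n−1,k−1}(X(i|j)), where X(i|j) is X with row i and column j deleted (Laplace expansion of the Cullis determinant along a column). -/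
private lemma strictMono_val_le {k n : ℕ} {f : Fin k → Fin n} (hf : StrictMono f) (x : Fin k) :
    (x : ℕ) ≤ (f x : ℕ) := by
  have h : (Finset.Iio x).card ≤ (Finset.Iio (f x)).card :=
    Finset.card_le_card_of_injOn f (fun a ha => Finset.mem_Iio.2 (hf (Finset.mem_Iio.1 ha)))
      hf.injective.injOn
  rwa [Fin.card_Iio, Fin.card_Iio] at h

private lemma strictMono_eq_of_image_eq {k n : ℕ} {f g : Fin k → Fin n}
    (hf : StrictMono f) (hg : StrictMono g)
    (h : Finset.univ.image f = Finset.univ.image g) : f = g := by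
  have hcard : (Finset.univ.image f).card = k := by
    rw [Finset.card_image_of_injective _ hf.injective, Finset.card_univ, Fintype.card_fin]
  have h1 : f = (Finset.univ.image f).orderEmbOfFin hcard :=
    Finset.orderEmbOfFin_unique hcard (fun x => Finset.mem_image_of_mem f (Finset.mem_univ x)) hf
  have h2 : g = (Finset.univ.image f).orderEmbOfFin hcard :=
    Finset.orderEmbOfFin_unique hcard
      (fun x => by rw [h]; exact Finset.mem_image_of_mem g (Finset.mem_univ x)) hg
  rw [h1, h2]

private noncomputable def finsetStrictMonoEquiv (n k : ℕ) :
    {s : Finset (Fin n) // s.card = k} ≃ {f : Fin k → Fin n // StrictMono f} where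
  toFun c := ⟨⇑(c.1.orderEmbOfFin c.2), (c.1.orderEmbOfFin c.2).strictMono⟩
  invFun f := ⟨Finset.univ.image f.1, by
    rw [Finset.card_image_of_injective _ f.2.injective, Finset.card_univ, Fintype.card_fin]⟩
  left_inv c := by
    apply Subtype.ext
    ext y
    simp only [Finset.mem_image, Finset.mem_univ, true_and]
    constructor
    · rintro ⟨x, rfl⟩; exact Finset.orderEmbOfFin_mem _ _ _
    · intro hy
      have hy' : y ∈ Set.range (c.1.orderEmbOfFin c.2) := by
        rw [Finset.range_orderEmbOfFin]; exact hy
      obtain ⟨x, hx⟩ := hy'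
      exact ⟨x, hx⟩
  right_inv f := by
    apply Subtype.ext
    exact (Finset.orderEmbOfFin_unique _
      (fun x => Finset.mem_image_of_mem f.1 (Finset.mem_univ x)) f.2).symm

private lemma cullisDet_eq_sum_strictMono {R : Type*} [CommRing R] {n k : ℕ}
    (X : Matrix (Fin n) (Fin k) R) :
    cullisDet X = ∑ f : {f : Fin k → Fin n // StrictMono f},
      (-1 : R) ^ (∑ α : Fin k, ((f.1 α : ℕ) - (α : ℕ))) * (X.submatrix f.1 id).det := by
  rw [cullisDet]
  exact Fintype.sum_equiv (finsetStrictMonoEquiv n k) _ _ (fun c => rfl)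

private noncomputable def extractFun {n k : ℕ} (g : Fin (k + 1) → Fin (n + 1))
    (hg : Function.Injective g) (β : Fin (k + 1)) : Fin k → Fin n :=
  fun x => Classical.choose (Fin.exists_succAbove_eq
    (show g (β.succAbove x) ≠ g β from fun h => Fin.succAbove_ne β x (hg h)))

private lemma extractFun_spec {n k : ℕ} (g : Fin (k + 1) → Fin (n + 1))
    (hg : Function.Injective g) (β : Fin (k + 1)) (x : Fin k) :
    (g β).succAbove (extractFun g hg β x) = g (β.succAbove x) :=
  Classical.choose_spec (Fin.exists_succAbove_eq
    (show g (β.succAbove x) ≠ g β from fun h => Fin.succAbove_ne β x (hg h)))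

private lemma extractFun_strictMono {n k : ℕ} {g : Fin (k + 1) → Fin (n + 1)}
    (hg : StrictMono g) (β : Fin (k + 1)) :
    StrictMono (extractFun g hg.injective β) := by
  intro a b hab
  rw [← Fin.succAbove_lt_succAbove_iff (p := g β), extractFun_spec, extractFun_spec]
  exact hg (Fin.succAbove_lt_succAbove_iff.2 hab)

private lemma exp_eq {n k : ℕ} {g : Fin (k + 1) → Fin (n + 1)} (hg : StrictMono g)
    (β : Fin (k + 1)) :
    (∑ α : Fin (k + 1), ((g α : ℕ) - (α : ℕ)))
      = (((g β : ℕ)) - (β : ℕ))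
        + ∑ x : Fin k, ((extractFun g hg.injective β x : ℕ) - (x : ℕ)) := by
  rw [Fin.sum_univ_succAbove _ β]
  congr 1
  refine Finset.sum_congr rfl fun x _ => ?_
  have hspec := extractFun_spec g hg.injective β x
  rcases lt_or_ge (Fin.castSucc x) β with hx | hx
  · have h1 : β.succAbove x = Fin.castSucc x := Fin.succAbove_of_castSucc_lt _ _ hx
    have h2 : (g β).succAbove (extractFun g hg.injective β x) < g β := by
      rw [hspec]; exact hg (by rw [h1]; exact hx)
    have h3 : Fin.castSucc (extractFun g hg.injective β x) < g β :=
      (Fin.succAbove_lt_iff_castSucc_lt _ _).1 h2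
    have h4 : (g β).succAbove (extractFun g hg.injective β x)
        = Fin.castSucc (extractFun g hg.injective β x) :=
      Fin.succAbove_of_castSucc_lt _ _ h3
    rw [← hspec, h4, h1]
    simp
  · have h1 : β.succAbove x = Fin.succ x := Fin.succAbove_of_le_castSucc _ _ hx
    have h2 : g β < (g β).succAbove (extractFun g hg.injective β x) := by
      rw [hspec]; exact hg (by rw [h1]; exact hx.trans_lt (Fin.castSucc_lt_succ (i := x)))
    have h3 : g β ≤ Fin.castSucc (extractFun g hg.injective β x) :=
      (Fin.lt_succAbove_iff_le_castSucc _ _).1 h2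
    have h4 : (g β).succAbove (extractFun g hg.injective β x)
        = Fin.succ (extractFun g hg.injective β x) :=
      Fin.succAbove_of_le_castSucc _ _ h3
    rw [← hspec, h4, h1]
    simp [Nat.succ_sub_succ]

private lemma image_eq_insert {n k : ℕ} (g : Fin (k + 1) → Fin (n + 1)) (β : Fin (k + 1)) :
    Finset.univ.image g = insert (g β) (Finset.univ.image (g ∘ β.succAbove)) := by
  ext y
  simp only [Finset.mem_image, Finset.mem_univ, true_and, Finset.mem_insert, Function.comp]
  constructor
  · rintro ⟨x, rfl⟩
    rcases eq_or_ne x β with rfl | hx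
    · exact Or.inl rfl
    · obtain ⟨z, hz⟩ := Fin.exists_succAbove_eq hx
      exact Or.inr ⟨z, by rw [hz]⟩
  · rintro (rfl | ⟨z, rfl⟩)
    · exact ⟨β, rfl⟩
    · exact ⟨β.succAbove z, rfl⟩

private noncomputable def cdPhi (n k : ℕ) :
    {g : Fin (k + 1) → Fin (n + 1) // StrictMono g} × Fin (k + 1)
      → Fin (n + 1) × {f : Fin k → Fin n // StrictMono f} :=
  fun q => (q.1.1 q.2, ⟨extractFun q.1.1 q.1.2.injective q.2, extractFun_strictMono q.1.2 q.2⟩)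

private lemma cdPhi_bijective (n k : ℕ) : Function.Bijective (cdPhi n k) := by
  rw [Fintype.bijective_iff_injective_and_card]
  constructor
  · rintro ⟨⟨g, hg⟩, β⟩ ⟨⟨g', hg'⟩, β'⟩ h
    simp only [cdPhi, Prod.mk.injEq, Subtype.mk.injEq] at h
    obtain ⟨h1, h2⟩ := h
    have hcomp : g ∘ β.succAbove = g' ∘ β'.succAbove := by
      funext x
      show g (β.succAbove x) = g' (β'.succAbove x)
      rw [← extractFun_spec g hg.injective β x, ← extractFun_spec g' hg'.injective β' x, h1, h2]
    have himg : Finset.univ.image g = Finset.univ.image g' := by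
      rw [image_eq_insert g β, image_eq_insert g' β', h1, hcomp]
    have hgg : g = g' := strictMono_eq_of_image_eq hg hg' himg
    subst hgg
    have hββ : β = β' := hg.injective h1
    subst hββ
    rfl
  · rw [Fintype.card_prod, Fintype.card_prod, Fintype.card_fin, Fintype.card_fin]
    have c1 : Fintype.card {f : Fin k → Fin n // StrictMono f} = Nat.choose n k := by
      rw [← Fintype.card_congr (finsetStrictMonoEquiv n k), Fintype.card_finset_len,
        Fintype.card_fin]
    have c2 : Fintype.card {g : Fin (k + 1) → Fin (n + 1) // StrictMono g}
        = Nat.choose (n + 1) (k + 1) := by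
      rw [← Fintype.card_congr (finsetStrictMonoEquiv (n + 1) (k + 1)), Fintype.card_finset_len,
        Fintype.card_fin]
    rw [c1, c2]
    exact (Nat.add_one_mul_choose_eq n k).symm

set_option maxHeartbeats 1000000 in
/-- Laplace expansion of the Cullis determinant along the j-th column:
det_{n,k}(X) = Σ_i (−1)^{i+j} x_{ij} det_{n−1,k−1}(X(i|j)). -/
theorem cullisDet_laplace_column {F : Type*} [Field F] {n k : ℕ}
    (hk : 1 ≤ k) (hkn : k + 1 ≤ n + 1)
    (X : Matrix (Fin (n + 1)) (Fin (k + 1)) F) (j : Fin (k + 1)) :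
    cullisDet X = ∑ i : Fin (n + 1),
      (-1 : F) ^ ((i : ℕ) + (j : ℕ)) * X i j *
        cullisDet (X.submatrix i.succAbove j.succAbove) := by
  rw [cullisDet_eq_sum_strictMono]
  calc (∑ g : {g : Fin (k + 1) → Fin (n + 1) // StrictMono g},
        (-1 : F) ^ (∑ α : Fin (k + 1), ((g.1 α : ℕ) - (α : ℕ))) * (X.submatrix g.1 id).det)
      = ∑ g : {g : Fin (k + 1) → Fin (n + 1) // StrictMono g}, ∑ β : Fin (k + 1),
          (-1 : F) ^ (∑ α : Fin (k + 1), ((g.1 α : ℕ) - (α : ℕ))) *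
            ((-1 : F) ^ ((β : ℕ) + (j : ℕ)) * X (g.1 β) j *
              (X.submatrix (g.1 ∘ β.succAbove) j.succAbove).det) := by
        refine Finset.sum_congr rfl fun g _ => ?_
        rw [Matrix.det_succ_column _ j, Finset.mul_sum]
        refine Finset.sum_congr rfl fun β _ => ?_
        rw [Matrix.submatrix_apply, Matrix.submatrix_submatrix, Function.id_comp, id_eq]
    _ = ∑ q : {g : Fin (k + 1) → Fin (n + 1) // StrictMono g} × Fin (k + 1),
          (-1 : F) ^ (∑ α : Fin (k + 1), ((q.1.1 α : ℕ) - (α : ℕ))) *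
            ((-1 : F) ^ ((q.2 : ℕ) + (j : ℕ)) * X (q.1.1 q.2) j *
              (X.submatrix (q.1.1 ∘ q.2.succAbove) j.succAbove).det) :=
        (Fintype.sum_prod_type' _).symm
    _ = ∑ p : Fin (n + 1) × {f : Fin k → Fin n // StrictMono f},
          (-1 : F) ^ ((p.1 : ℕ) + (j : ℕ)) * X p.1 j *
            ((-1 : F) ^ (∑ α : Fin k, ((p.2.1 α : ℕ) - (α : ℕ))) *
              (X.submatrix (p.1.succAbove ∘ p.2.1) j.succAbove).det) := by
        refine Fintype.sum_bijective (cdPhi n k) (cdPhi_bijective n k) _ _ fun q => ?_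
        obtain ⟨⟨g, hg⟩, β⟩ := q
        simp only [cdPhi]
        have hmat : (g β).succAbove ∘ (extractFun g hg.injective β) = g ∘ β.succAbove :=
          funext fun x => extractFun_spec g hg.injective β x
        rw [hmat, exp_eq hg β]
        have hβ : (β : ℕ) ≤ ((g β) : ℕ) := strictMono_val_le hg β
        have hpow : ((-1 : F)) ^ ((((g β) : ℕ) - (β : ℕ))
              + ∑ x : Fin k, ((extractFun g hg.injective β x : ℕ) - (x : ℕ)))
              * (-1 : F) ^ ((β : ℕ) + (j : ℕ))
            = (-1 : F) ^ (((g β) : ℕ) + (j : ℕ)) *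
              (-1 : F) ^ (∑ x : Fin k, ((extractFun g hg.injective β x : ℕ) - (x : ℕ))) := by
          rw [← pow_add, ← pow_add]
          congr 1
          omega
        linear_combination
          X (g β) j * (X.submatrix (g ∘ β.succAbove) j.succAbove).det * hpow
    _ = ∑ i : Fin (n + 1), ∑ f : {f : Fin k → Fin n // StrictMono f},
          (-1 : F) ^ ((i : ℕ) + (j : ℕ)) * X i j *
            ((-1 : F) ^ (∑ α : Fin k, ((f.1 α : ℕ) - (α : ℕ))) *
              (X.submatrix (i.succAbove ∘ f.1) j.succAbove).det) :=
        Fintype.sum_prod_type' (fun (i : Fin (n + 1)) (f : {f : Fin k → Fin n // StrictMono f}) =>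
          (-1 : F) ^ ((i : ℕ) + (j : ℕ)) * X i j *
            ((-1 : F) ^ (∑ α : Fin k, ((f.1 α : ℕ) - (α : ℕ))) *
              (X.submatrix (i.succAbove ∘ f.1) j.succAbove).det))
    _ = ∑ i : Fin (n + 1),
          (-1 : F) ^ ((i : ℕ) + (j : ℕ)) * X i j *
            cullisDet (X.submatrix i.succAbove j.succAbove) := by
        refine Finset.sum_congr rfl fun i _ => ?_
        rw [cullisDet_eq_sum_strictMono, Finset.mul_sum]
        refine Finset.sum_congr rfl fun f _ => ?_
        rw [Matrix.submatrix_submatrix, Function.comp_id]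
end

section
/- Let k ≤ n with n + k odd, X ∈ M_{n×k}(F), and 1 ≤ i ≤ n. Let X' be the matrix obtained from X by the cyclic row shift sending row i of X to the first row. Then (−1)^{(i+1)k} det_{n,k}(X') = det_{n,k}(X). -/
open Finset Equiv Fin.NatCast

private lemma negOnePowCongr {F : Type*} [Monoid F] [HasDistribNeg F] {a b : ℕ}
    (h : a % 2 = b % 2) : (-1 : F) ^ a = (-1 : F) ^ b := by
  rw [← Nat.div_add_mod a 2, ← Nat.div_add_mod b 2, pow_add, pow_add, pow_mul, pow_mul,
    neg_one_sq, one_pow, one_pow, h]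

private lemma strictMonoFinLe {k : ℕ} {f : Fin k → ℕ} (hf : StrictMono f) :
    ∀ α : Fin k, (α : ℕ) ≤ f α := by
  intro ⟨a, ha⟩
  induction a with
  | zero => exact Nat.zero_le _
  | succ i ih =>
    have h1 := ih (Nat.lt_of_succ_lt ha)
    have h2 := hf (show (⟨i, Nat.lt_of_succ_lt ha⟩ : Fin k) < ⟨i + 1, ha⟩ by
      simp [Fin.lt_def])
    simp only [Fin.val_mk, Fin.mk_lt_mk] at h1 h2 ⊢
    omega

private lemma lastAddOne (N : ℕ) : (Fin.last N) + 1 = 0 := by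
  ext
  simp [Fin.val_add, Fin.val_last]

private lemma termShift {F : Type*} [Field F] {N k : ℕ} (hkn : k ≤ N + 1)
    (hodd : Odd (N + 1 + k)) (X : Matrix (Fin (N + 1)) (Fin k) F)
    (s : Finset (Fin (N + 1))) (hs : s.card = k)
    (t : Finset (Fin (N + 1))) (ht : t.card = k)
    (hts : t = s.map (Equiv.addRight (1 : Fin (N + 1))).toEmbedding) :
    (-1 : F) ^ (∑ α : Fin k, ((s.orderEmbOfFin hs α : ℕ) - (α : ℕ))) *
      ((X.submatrix (fun r => r + 1) id).submatrix (⇑(s.orderEmbOfFin hs)) id).det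
    = (-1 : F) ^ k * ((-1 : F) ^ (∑ α : Fin k, ((t.orderEmbOfFin ht α : ℕ) - (α : ℕ))) *
      (X.submatrix (⇑(t.orderEmbOfFin ht)) id).det) := by
  have hvmono : StrictMono (fun α : Fin k => ((s.orderEmbOfFin hs α) : ℕ)) :=
    fun a b hab => (s.orderEmbOfFin hs).strictMono hab
  rw [← mul_assoc, ← pow_add]
  by_cases h : Fin.last N ∈ s
  · -- the top row index is in s
    obtain ⟨m, rfl⟩ : ∃ m, k = m + 1 := ⟨k - 1, by
      have := Finset.card_pos.mpr ⟨_, h⟩; omega⟩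
    have hmax : s.orderEmbOfFin hs (Fin.last m) = Fin.last N := by
      have h1 := s.orderEmbOfFin_last hs (Nat.succ_pos m)
      have h2 : s.max' ⟨_, h⟩ = Fin.last N :=
        le_antisymm (Fin.le_last _) (s.le_max' _ h)
      rw [← h2]
      exact h1
    set f : Fin (m + 1) → Fin (N + 1) :=
      Fin.cases 0 (fun i => s.orderEmbOfFin hs i.castSucc + 1) with hfdef
    have hf0 : f 0 = 0 := rfl
    have hfsucc : ∀ i : Fin m, f i.succ = s.orderEmbOfFin hs i.castSucc + 1 :=
      fun i => by simp [hfdef]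
    have hlt : ∀ i : Fin m, s.orderEmbOfFin hs i.castSucc < Fin.last N := by
      intro i
      rw [← hmax]
      exact (s.orderEmbOfFin hs).strictMono (Fin.castSucc_lt_last i)
    have hval : ∀ i : Fin m,
        ((s.orderEmbOfFin hs i.castSucc + 1 : Fin (N + 1)) : ℕ)
          = (s.orderEmbOfFin hs i.castSucc : ℕ) + 1 :=
      fun i => Fin.val_add_one_of_lt (hlt i)
    have hmono : StrictMono f := by
      intro a b hab
      induction b using Fin.cases with
      | zero => exact absurd hab (by simp)
      | succ j =>
        induction a using Fin.cases with
        | zero =>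
          rw [hf0, hfsucc, Fin.lt_def, hval]
          simp
        | succ i =>
          rw [hfsucc, hfsucc, Fin.lt_def, hval, hval]
          exact Nat.succ_lt_succ (hvmono (Fin.castSucc_lt_castSucc_iff.2
            (Fin.succ_lt_succ_iff.1 hab)))
    have hmem : ∀ α, f α ∈ t := by
      intro α
      rw [hts]
      induction α using Fin.cases with
      | zero =>
        rw [hf0]
        rw [Finset.mem_map]
        exact ⟨Fin.last N, h, lastAddOne N⟩
      | succ i =>
        rw [hfsucc]
        exact Finset.mem_map_of_mem _ (s.orderEmbOfFin_mem hs i.castSucc)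
    have hford : f = ⇑(t.orderEmbOfFin ht) := Finset.orderEmbOfFin_unique ht hmem hmono
    have hdet : ((X.submatrix (fun r => r + 1) id).submatrix (⇑(s.orderEmbOfFin hs)) id)
        = (X.submatrix f id).submatrix (⇑(finRotate (m + 1))) id := by
      ext a b
      simp only [Matrix.submatrix_apply, id_eq]
      induction a using Fin.lastCases with
      | last =>
        rw [hmax, finRotate_succ_apply, lastAddOne, lastAddOne, hf0]
      | cast i =>
        rw [finRotate_succ_apply, Fin.coeSucc_eq_succ, hfsucc]
    have hEt : (∑ α : Fin (m + 1), ((t.orderEmbOfFin ht α : ℕ) - (α : ℕ)))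
        = ∑ i : Fin m, ((s.orderEmbOfFin hs i.castSucc : ℕ) - (i : ℕ)) := by
      rw [← hford, Fin.sum_univ_succ, hf0]
      simp only [Fin.val_zero, Nat.zero_sub, Nat.sub_zero, zero_add]
      refine Finset.sum_congr rfl fun i _ => ?_
      rw [hfsucc, hval, Fin.val_succ]
      omega
    have hEs : (∑ α : Fin (m + 1), ((s.orderEmbOfFin hs α : ℕ) - (α : ℕ)))
        = (∑ i : Fin m, ((s.orderEmbOfFin hs i.castSucc : ℕ) - (i : ℕ))) + (N - m) := by
      rw [Fin.sum_univ_castSucc]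
      simp only [Fin.coe_castSucc, Fin.val_last, hmax]
    rw [hdet, Matrix.det_permute, sign_finRotate, hford, hEt, hEs]
    have hm : m ≤ N := by omega
    have hpar : (N + 1 + (m + 1)) % 2 = 1 := Nat.odd_iff.mp hodd
    rw [show ((((-1 : ℤˣ) ^ (m + 1 - 1) : ℤˣ) : ℤ) : F) = (-1 : F) ^ m by push_cast; simp]
    rw [← mul_assoc, ← pow_add]
    congr 1
    apply negOnePowCongr
    omega
  · -- the top row index is not in s
    have hlt : ∀ α : Fin k, s.orderEmbOfFin hs α < Fin.last N := fun α =>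
      Fin.lt_last_iff_ne_last.2 fun he => h (he ▸ s.orderEmbOfFin_mem hs α)
    have hval : ∀ α : Fin k,
        ((s.orderEmbOfFin hs α + 1 : Fin (N + 1)) : ℕ) = (s.orderEmbOfFin hs α : ℕ) + 1 :=
      fun α => Fin.val_add_one_of_lt (hlt α)
    have hmono : StrictMono (fun α : Fin k => s.orderEmbOfFin hs α + 1) := by
      intro a b hab
      rw [Fin.lt_def, hval, hval]
      exact Nat.succ_lt_succ (hvmono hab)
    have hmem : ∀ α, s.orderEmbOfFin hs α + 1 ∈ t := by
      intro α
      rw [hts, Finset.mem_map]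
      exact ⟨_, s.orderEmbOfFin_mem hs α, rfl⟩
    have hford : (fun α : Fin k => s.orderEmbOfFin hs α + 1) = ⇑(t.orderEmbOfFin ht) :=
      Finset.orderEmbOfFin_unique ht hmem hmono
    have hdet : ((X.submatrix (fun r => r + 1) id).submatrix (⇑(s.orderEmbOfFin hs)) id)
        = X.submatrix (⇑(t.orderEmbOfFin ht)) id := by
      rw [← hford]
      ext a b
      simp [Matrix.submatrix_apply]
    have hEt : (∑ α : Fin k, ((t.orderEmbOfFin ht α : ℕ) - (α : ℕ)))
        = (∑ α : Fin k, ((s.orderEmbOfFin hs α : ℕ) - (α : ℕ))) + k := by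
      rw [← hford]
      have key : ∀ α : Fin k,
          ((((fun α : Fin k => s.orderEmbOfFin hs α + 1) α : Fin (N + 1)) : ℕ) - (α : ℕ))
            = ((s.orderEmbOfFin hs α : ℕ) - (α : ℕ)) + 1 := by
        intro α
        have := strictMonoFinLe hvmono α
        simp only []
        rw [hval]
        omega
      rw [Finset.sum_congr rfl (fun α _ => key α), Finset.sum_add_distrib]
      simp
    rw [hdet, hEt]
    congr 1
    apply negOnePowCongr
    omega

private lemma cullisDetShiftOne {F : Type*} [Field F] {N k : ℕ} (hkn : k ≤ N + 1)
    (hodd : Odd (N + 1 + k)) (X : Matrix (Fin (N + 1)) (Fin k) F) :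
    cullisDet (X.submatrix (fun r => r + 1) id) = (-1 : F) ^ k * cullisDet X := by
  let e : {s : Finset (Fin (N + 1)) // s.card = k} ≃ {s : Finset (Fin (N + 1)) // s.card = k} :=
    ((Equiv.addRight (1 : Fin (N + 1))).finsetCongr).subtypeEquiv (fun s => by
      simp [Equiv.finsetCongr_apply, Finset.card_map])
  unfold cullisDet
  rw [← Equiv.sum_comp e (fun c : {s : Finset (Fin (N + 1)) // s.card = k} =>
    (-1 : F) ^ (∑ α : Fin k, ((c.1.orderEmbOfFin c.2 α : ℕ) - (α : ℕ))) *
      (X.submatrix (⇑(c.1.orderEmbOfFin c.2)) id).det), Finset.mul_sum]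
  refine Finset.sum_congr rfl fun c _ => ?_
  exact termShift hkn hodd X c.1 c.2 (e c).1 (e c).2 rfl

/-- Invariance of the Cullis determinant under cyclic row shifts when n + k is odd:
if X' is obtained from X by the cyclic shift sending row i = c + 1 (1-based) to the
first row, then (−1)^{(i+1)k} det_{n,k}(X') = det_{n,k}(X). -/
theorem cullisDet_cyclic_shift {F : Type*} [Field F] {n k : ℕ}
    (hkn : k ≤ n) (hodd : Odd (n + k)) (X : Matrix (Fin n) (Fin k) F) (c : Fin n) :
    (-1 : F) ^ (((c : ℕ) + 2) * k) * cullisDet (X.submatrix (fun r => r + c) id)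
      = cullisDet X := by
  have hn : 0 < n := c.pos
  obtain ⟨N, rfl⟩ : ∃ N, n = N + 1 := ⟨n - 1, by omega⟩
  have key : ∀ j : ℕ, (-1 : F) ^ ((j + 2) * k) *
      cullisDet (X.submatrix (fun r => r + (j : Fin (N + 1))) id) = cullisDet X := by
    intro j
    induction j with
    | zero =>
      have h0 : (X.submatrix (fun r => r + ((0 : ℕ) : Fin (N + 1))) id) = X := by
        ext a b
        simp
      rw [h0, show (0 + 2) * k = 2 * k from rfl, pow_mul]
      simp
    | succ j ih =>
      have h1 : (X.submatrix (fun r => r + ((j + 1 : ℕ) : Fin (N + 1))) id)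
          = (X.submatrix (fun r => r + (j : Fin (N + 1))) id).submatrix
              (fun r => r + 1) id := by
        ext a b
        simp only [Matrix.submatrix_apply, id_eq]
        congr 1
        push_cast
        abel
      rw [h1, cullisDetShiftOne hkn hodd, ← ih]
      rw [← mul_assoc, ← pow_add]
      rw [show (j + 1 + 2) * k + k = (j + 2) * k + 2 * k from by ring, pow_add, pow_mul]
      simp
  have hc := key (c : ℕ)
  rwa [Fin.cast_val_eq_self] at hc
end

section
/- Let k ≤ n with n + k even, X ∈ M_{n×k}(F), and 1 ≤ i ≤ n. Let X' be obtained from X by cyclically shifting rows so that row i becomes the first row, and then multiplying the bottom i−1 rows (the rows that wrapped around) by −1. Then (−1)^{(n−i)k} det_{n,k}(X') = det_{n,k}(X). -/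
namespace CullisAux

open Fin.NatCast

lemma val_le_of_strictMono {k : ℕ} {g : Fin k → ℕ} (hg : StrictMono g) (α : Fin k) :
    (α : ℕ) ≤ g α := by
  have : ∀ j : ℕ, ∀ h : j < k, j ≤ g ⟨j, h⟩ := by
    intro j
    induction j with
    | zero => intro h; exact Nat.zero_le _
    | succ i ih =>
      intro h
      have h1 : i < k := by omega
      have h2 := hg (show (⟨i, h1⟩ : Fin k) < ⟨i + 1, h⟩ from by simp [Fin.lt_def])
      have := ih h1
      omega
  simpa using this α.1 α.2

variable {F : Type*} [Field F] {n k : ℕ}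

/-- One-step semicyclic shift. -/
noncomputable def S1 [NeZero n] (X : Matrix (Fin n) (Fin k) F) : Matrix (Fin n) (Fin k) F :=
  Matrix.of fun r j => (if (r : ℕ) + 1 < n then 1 else -1) * X (r + 1) j

lemma per_subset [NeZero n] (hkn : k ≤ n) (heven : Even (n + k)) (hn : 0 < n)
    (X : Matrix (Fin n) (Fin k) F) (s : Finset (Fin n)) (hs : s.card = k)
    (hs' : (s.map (Equiv.addRight (1 : Fin n)).toEmbedding).card = k) :
    (-1 : F) ^ (∑ α : Fin k, ((s.orderEmbOfFin hs α : ℕ) - (α : ℕ))) *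
        ((S1 X).submatrix (⇑(s.orderEmbOfFin hs)) id).det
      = (-1 : F) ^ k *
        ((-1 : F) ^ (∑ α : Fin k,
            (((s.map (Equiv.addRight (1 : Fin n)).toEmbedding).orderEmbOfFin hs' α : ℕ) - (α : ℕ))) *
          (X.submatrix (⇑((s.map (Equiv.addRight (1 : Fin n)).toEmbedding).orderEmbOfFin hs')) id).det) := by
  classical
  set e := s.orderEmbOfFin hs with he
  have hemem : ∀ α : Fin k, e α ∈ s := fun α => Finset.orderEmbOfFin_mem s hs α
  have hval_le : ∀ α : Fin k, (α : ℕ) ≤ (e α : ℕ) := by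
    refine val_le_of_strictMono (fun a b h => ?_)
    exact e.strictMono h
  set f : Fin k → Fin n := fun α => e α + 1 with hfdef
  have hfm : ∀ α : Fin k, f α ∈ s.map (Equiv.addRight (1 : Fin n)).toEmbedding := by
    intro α
    have : f α = (Equiv.addRight (1 : Fin n)).toEmbedding (e α) := by
      simp [hfdef, Equiv.coe_toEmbedding, Equiv.coe_addRight]
    rw [this]
    exact Finset.mem_map_of_mem _ (hemem α)
  set top : Fin n := ⟨n - 1, by omega⟩ with htopdef
  by_cases hB : top ∈ s
  · -- Case B : top row selected; it wraps to row 0 with a sign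
    have hk0 : k ≠ 0 := by
      rintro rfl
      rw [Finset.card_eq_zero] at hs
      subst hs
      simp at hB
    obtain ⟨m, rfl⟩ := Nat.exists_eq_succ_of_ne_zero hk0
    have hne : s.Nonempty := ⟨top, hB⟩
    have hmax : s.max' hne = top :=
      le_antisymm (Finset.max'_le _ _ _ (fun x _ => by
        rw [Fin.le_def]
        have := x.isLt
        simp only [htopdef]
        omega)) (Finset.le_max' _ _ hB)
    have hlast : e (Fin.last m) = top := by
      have h := Finset.orderEmbOfFin_last hs (Nat.succ_pos m)
      rw [he]
      convert h.trans hmax using 2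
      simp [Fin.ext_iff]
    have hcs : ∀ i : Fin m, ((e i.castSucc) : ℕ) < n - 1 := by
      intro i
      have h := e.strictMono (Fin.castSucc_lt_last i)
      rw [hlast, Fin.lt_def] at h
      simpa [htopdef] using h
    have htopadd : top + 1 = 0 := by
      by_cases h1 : n = 1
      · subst h1
        exact Subsingleton.elim _ _
      · have h2 : 2 ≤ n := by omega
        apply Fin.ext
        rw [Fin.val_add, Fin.val_one' n, Nat.mod_eq_of_lt (by omega : 1 < n)]
        simp only [htopdef, Fin.val_zero]
        rw [show n - 1 + 1 = n by omega, Nat.mod_self]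
    set σ : Equiv.Perm (Fin (m + 1)) := (finRotate (m + 1))⁻¹ with hσdef
    set g : Fin (m + 1) → Fin n := fun β => f (σ β) with hgdef
    have hgmem : ∀ β, g β ∈ s.map (Equiv.addRight (1 : Fin n)).toEmbedding :=
      fun β => hfm (σ β)
    have hρ : ∀ i : Fin m, σ i.succ = i.castSucc := by
      intro i
      rw [hσdef, Equiv.Perm.inv_def, Equiv.symm_apply_eq, finRotate_succ_apply,
        Fin.coeSucc_eq_succ]
    have hσ0 : σ 0 = Fin.last m := by
      rw [hσdef, Equiv.Perm.inv_def, Equiv.symm_apply_eq, finRotate_succ_apply,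
        Fin.last_add_one]
    have hflast : f (Fin.last m) = 0 := by
      show e (Fin.last m) + 1 = 0
      rw [hlast, htopadd]
    have hg0 : (g 0 : ℕ) = 0 := by
      show (f (σ 0) : ℕ) = 0
      rw [hσ0, hflast, Fin.val_zero]
    have hgs : ∀ i : Fin m, (g i.succ : ℕ) = (e i.castSucc : ℕ) + 1 := by
      intro i
      show (f (σ i.succ) : ℕ) = _
      rw [hρ i]
      show ((e i.castSucc + 1 : Fin n) : ℕ) = _
      have h2 : 2 ≤ n := by have := hcs i; omega
      have h1 : (1 : ℕ) % n = 1 := Nat.mod_eq_of_lt (by omega)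
      rw [Fin.val_add, Fin.val_one' n, h1]
      exact Nat.mod_eq_of_lt (by have := hcs i; omega)
    have hmono : StrictMono g := by
      intro a b hab
      induction a using Fin.cases with
      | zero =>
        induction b using Fin.cases with
        | zero => exact absurd hab (lt_irrefl _)
        | succ j =>
          rw [Fin.lt_def, hg0, hgs j]
          omega
      | succ i =>
        induction b using Fin.cases with
        | zero =>
          exact absurd hab (by rw [Fin.lt_def]; simp)
        | succ j =>
          have hij : i.castSucc < j.castSucc := by
            rw [Fin.lt_def] at hab ⊢
            simpa using hab
          have := e.strictMono hij
          rw [Fin.lt_def] at this ⊢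
          rw [hgs i, hgs j]
          omega
    have hg : g = ⇑((s.map (Equiv.addRight (1 : Fin n)).toEmbedding).orderEmbOfFin hs') :=
      Finset.orderEmbOfFin_unique hs' hgmem hmono
    -- determinant of shifted submatrix
    have hdet1 : (S1 X).submatrix (⇑e) id = Matrix.of (fun β j =>
        (if β = Fin.last m then (-1 : F) else 1) * (X.submatrix f id) β j) := by
      ext β j
      simp only [Matrix.submatrix_apply, id_eq, S1, Matrix.of_apply]
      by_cases hβ : β = Fin.last m
      · subst hβ
        have hv : (e (Fin.last m) : ℕ) = n - 1 := by rw [hlast]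
        rw [if_pos rfl, if_neg (by omega : ¬((e (Fin.last m) : ℕ) + 1 < n))]
      · have hβ' : β < Fin.last m := lt_of_le_of_ne (Fin.le_last β) hβ
        have h := e.strictMono hβ'
        rw [hlast, Fin.lt_def] at h
        simp only [htopdef] at h
        rw [if_neg hβ, if_pos (by omega : (e β : ℕ) + 1 < n), one_mul]
    have hD : ((S1 X).submatrix (⇑e) id).det = -((X.submatrix f id).det) := by
      rw [hdet1, Matrix.det_mul_column]
      have hprod : (∏ β : Fin (m + 1), (if β = Fin.last m then (-1 : F) else 1)) = -1 := by
        rw [Finset.prod_ite_eq' Finset.univ (Fin.last m) (fun _ => (-1 : F))]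
        simp
      rw [hprod]
      ring
    have hperm : (X.submatrix g id) = (X.submatrix f id).submatrix (⇑σ) id := rfl
    have hsign : Equiv.Perm.sign σ = (-1) ^ m := by
      rw [hσdef, map_inv, sign_finRotate]
      simp
    have hdetg : (X.submatrix g id).det = (-1 : F) ^ m * (X.submatrix f id).det := by
      rw [hperm, Matrix.det_permute, hsign]
      push_cast
      ring
    have hmm : (-1 : F) ^ m * (-1 : F) ^ m = 1 := by
      rw [← mul_pow]; norm_num
    have hdetf : (X.submatrix f id).det = (-1 : F) ^ m * (X.submatrix g id).det := by
      rw [hdetg, ← mul_assoc, hmm, one_mul]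
    -- sums of signs
    set S : ℕ := ∑ i : Fin m, ((e i.castSucc : ℕ) - (i : ℕ)) with hSdef
    have hsum1 : (∑ β : Fin (m + 1), ((e β : ℕ) - (β : ℕ))) = S + (n - 1 - m) := by
      rw [Fin.sum_univ_castSucc]
      congr 1
      rw [hlast, Fin.val_last]
    have hsum2 : (∑ β : Fin (m + 1), ((g β : ℕ) - (β : ℕ))) = S := by
      rw [Fin.sum_univ_succ, hg0]
      simp only [Fin.val_zero, Nat.sub_zero, Fin.val_succ]
      rw [zero_add]
      exact Finset.sum_congr rfl (fun i _ => by rw [hgs i, Nat.succ_sub_succ])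
    have hnk : Even (n - 1 - m) := by
      have h1 := Nat.even_iff.mp heven
      exact Nat.even_iff.mpr (by omega)
    rw [← hg, hsum1, hsum2, hD, hdetf, pow_add, hnk.neg_one_pow, mul_one, pow_succ]
    ring
  · -- Case A : top row not selected
    have hlt : ∀ α : Fin k, (e α : ℕ) + 1 < n := by
      intro α
      have h1 := (e α).isLt
      have h2 : e α ≠ top := fun h => hB (h ▸ hemem α)
      have h3 : (e α : ℕ) ≠ n - 1 := fun h => h2 (Fin.ext (by rw [h]))
      omega
    have hfval : ∀ α : Fin k, ((f α : Fin n) : ℕ) = (e α : ℕ) + 1 := by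
      intro α
      have h2 : 2 ≤ n := by have := hlt α; omega
      have h1 : (1 : ℕ) % n = 1 := Nat.mod_eq_of_lt (by omega)
      show ((e α + 1 : Fin n) : ℕ) = (e α : ℕ) + 1
      rw [Fin.val_add, Fin.val_one' n, h1]
      exact Nat.mod_eq_of_lt (hlt α)
    have hmono : StrictMono f := by
      intro a b h
      have h1 := e.strictMono h
      rw [Fin.lt_def] at h1 ⊢
      rw [hfval, hfval]
      omega
    have hf : f = ⇑((s.map (Equiv.addRight (1 : Fin n)).toEmbedding).orderEmbOfFin hs') :=
      Finset.orderEmbOfFin_unique hs' hfm hmono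
    have hdet : (S1 X).submatrix (⇑e) id = X.submatrix f id := by
      ext α j
      simp only [Matrix.submatrix_apply, id_eq, S1, Matrix.of_apply]
      rw [if_pos (hlt α), one_mul]
    have hsum : (∑ α : Fin k, ((f α : ℕ) - (α : ℕ)))
        = (∑ α : Fin k, ((e α : ℕ) - (α : ℕ))) + k := by
      have h1 : ∀ α : Fin k, (f α : ℕ) - (α : ℕ) = ((e α : ℕ) - (α : ℕ)) + 1 := by
        intro α
        have := hval_le α
        rw [hfval]
        omega
      rw [Finset.sum_congr rfl (fun α _ => h1 α), Finset.sum_add_distrib,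
        Finset.sum_const, Finset.card_univ, Fintype.card_fin, smul_eq_mul, mul_one]
    rw [← hf, hdet, hsum, pow_add]
    have hkk : (-1 : F) ^ k * (-1 : F) ^ k = 1 := by
      rw [← mul_pow]
      norm_num
    linear_combination (-(((-1 : F) ^ (∑ α : Fin k, ((e α : ℕ) - (α : ℕ)))) *
      (X.submatrix f id).det)) * hkk

lemma cullis_S1 [NeZero n] (hkn : k ≤ n) (heven : Even (n + k)) (hn : 0 < n)
    (X : Matrix (Fin n) (Fin k) F) :
    cullisDet (S1 X) = (-1 : F) ^ k * cullisDet X := by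
  classical
  have hcard : ∀ s : Finset (Fin n),
      s.card = k ↔ ((Equiv.addRight (1 : Fin n)).finsetCongr s).card = k := by
    intro s
    simp [Equiv.finsetCongr_apply, Finset.card_map]
  set E : {s : Finset (Fin n) // s.card = k} ≃ {s : Finset (Fin n) // s.card = k} :=
    ((Equiv.addRight (1 : Fin n)).finsetCongr).subtypeEquiv hcard with hE
  unfold cullisDet
  rw [Finset.mul_sum]
  refine Fintype.sum_equiv E _ _ ?_
  rintro ⟨s, hs⟩
  exact per_subset hkn heven hn X s hs ((hcard s).mp hs)

theorem key [NeZero n] (hkn : k ≤ n) (heven : Even (n + k)) (X : Matrix (Fin n) (Fin k) F) :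
    ∀ m : ℕ, m < n →
      (-1 : F) ^ ((n - 1 - m) * k) *
          cullisDet (Matrix.of fun r j =>
            (if (r : ℕ) + m < n then 1 else -1) * X (r + (m : Fin n)) j)
        = cullisDet X := by
  have hn : 0 < n := Nat.pos_of_ne_zero (NeZero.ne n)
  intro m
  induction m with
  | zero =>
    intro _
    have h1 : (Matrix.of fun (r : Fin n) (j : Fin k) =>
        ((if (r : ℕ) + 0 < n then 1 else -1) * X (r + ((0 : ℕ) : Fin n)) j : F)) = X := by
      ext r j
      have hr : (r : ℕ) + 0 < n := by omega
      simp [hr]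
    rw [h1]
    have h2 : Even ((n - 1 - 0) * k) := by
      rcases Nat.even_or_odd k with hk | hk
      · exact hk.mul_left _
      · have hsum := Nat.even_iff.mp heven
        have hkk := Nat.odd_iff.mp hk
        have hne : Even (n - 1 - 0) := Nat.even_iff.mpr (by omega)
        exact hne.mul_right _
    rw [h2.neg_one_pow, one_mul]
  | succ m ih =>
    intro hm1
    have hn2 : 2 ≤ n := by omega
    have hone : ((1 : Fin n) : ℕ) = 1 := by
      rw [Fin.val_one' n]; exact Nat.mod_eq_of_lt (by omega)
    have hMat : (Matrix.of fun (r : Fin n) (j : Fin k) =>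
        ((if (r : ℕ) + (m + 1) < n then 1 else -1) * X (r + ((m + 1 : ℕ) : Fin n)) j : F))
        = S1 (Matrix.of fun (r : Fin n) (j : Fin k) =>
            ((if (r : ℕ) + m < n then 1 else -1) * X (r + ((m : ℕ) : Fin n)) j : F)) := by
      ext r j
      have hc : ((m + 1 : ℕ) : Fin n) = ((m : ℕ) : Fin n) + 1 := by push_cast; ring
      have hadd : r + (((m : ℕ) : Fin n) + 1) = (r + 1) + ((m : ℕ) : Fin n) := by abel
      simp only [S1, Matrix.of_apply, hc, hadd]
      by_cases hr : (r : ℕ) + 1 < n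
      · have hv : ((r + 1 : Fin n) : ℕ) = (r : ℕ) + 1 := by
          rw [Fin.val_add, hone]
          exact Nat.mod_eq_of_lt hr
        rw [hv, if_pos hr]
        have : ((r : ℕ) + (m + 1) < n) ↔ ((r : ℕ) + 1 + m < n) := by omega
        by_cases h2 : (r : ℕ) + (m + 1) < n
        · rw [if_pos h2, if_pos (by omega : (r : ℕ) + 1 + m < n)]
          ring
        · rw [if_neg h2, if_neg (by omega : ¬((r : ℕ) + 1 + m < n))]
          ring
      · have hrv : (r : ℕ) = n - 1 := by have := r.isLt; omega
        have hv : ((r + 1 : Fin n) : ℕ) = 0 := by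
          have h : n - 1 + 1 = n := by omega
          rw [Fin.val_add, hone, hrv, h, Nat.mod_self]
        rw [hv, if_neg hr, if_neg (show ¬((r : ℕ) + (m + 1) < n) by omega),
          if_pos (show 0 + m < n by omega)]
        ring
    rw [hMat, cullis_S1 hkn heven hn]
    have ih' := ih (by omega)
    rw [← ih']
    have hexp : (n - 1 - m) * k = (n - 1 - (m + 1)) * k + k := by
      have h1 : n - 1 - m = (n - 1 - (m + 1)) + 1 := by omega
      rw [h1]; ring
    have hpow : (-1 : F) ^ ((n - 1 - m) * k)
        = (-1 : F) ^ ((n - 1 - (m + 1)) * k) * (-1 : F) ^ k := by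
      rw [hexp, pow_add]
    rw [hpow]
    ring

end CullisAux

/-- Invariance of the Cullis determinant under semi-cyclic row shifts when n + k is even:
if X' is obtained from X by cyclically shifting rows so that row i = c + 1 (1-based)
becomes the first row and then negating the i − 1 rows that wrapped around, then
(−1)^{(n−i)k} det_{n,k}(X') = det_{n,k}(X). -/
theorem cullisDet_semicyclic_shift {F : Type*} [Field F] {n k : ℕ}
    (hkn : k ≤ n) (heven : Even (n + k)) (X : Matrix (Fin n) (Fin k) F) (c : Fin n) :
    (-1 : F) ^ ((n - 1 - (c : ℕ)) * k) *
        cullisDet (Matrix.of fun r j =>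
          (if (r : ℕ) + (c : ℕ) < n then 1 else -1) * X (r + c) j)
      = cullisDet X := by
  haveI : NeZero n := ⟨by rcases c with ⟨_, h⟩; omega⟩
  have := CullisAux.key hkn heven X (c : ℕ) c.isLt
  simpa [Fin.cast_val_eq_self] using this
end

section
/- Let K ⊆ M_{n×k}(F) be a linear variety (coset of a linear subspace) such that det_{n,k}(X) = 0 for every X ∈ K. Then the codimension of K in M_{n×k}(F) is at least k, i.e., dim of the subspace belonging to K is at most nk − k. -/
open Module

section Helpers

variable {F : Type*} [Field F]

private lemma altSum_apply {ι' ι M N R : Type*} [Fintype ι] [CommSemiring R] [AddCommMonoid M]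
    [Module R M] [AddCommMonoid N] [Module R N]
    (s : Finset ι') (f : ι' → M [⋀^ι]→ₗ[R] N) (v : ι → M) :
    (∑ i ∈ s, f i) v = ∑ i ∈ s, f i v := by
  induction s using Finset.cons_induction with
  | empty => simp
  | cons a s ha ih => simp [Finset.sum_cons, ih]

private lemma exists_not_mem_two {M : Type*} [AddCommGroup M] [Module F M]
    {N B : Submodule F M} (hN : N ≠ ⊤) (hB : B ≠ ⊤) : ∃ u, u ∉ N ∧ u ∉ B := by
  obtain ⟨x, hx⟩ : ∃ x, x ∉ N := by
    by_contra h; push_neg at h; exact hN (Submodule.eq_top_iff'.2 h)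
  obtain ⟨y, hy⟩ : ∃ y, y ∉ B := by
    by_contra h; push_neg at h; exact hB (Submodule.eq_top_iff'.2 h)
  by_cases hxB : x ∈ B
  · by_cases hyN : y ∈ N
    · refine ⟨x + y, fun h => hx ?_, fun h => hy ?_⟩
      · simpa using N.sub_mem h hyN
      · simpa using B.sub_mem h hxB
    · exact ⟨y, hyN, hy⟩
  · exact ⟨x, hx, hxB⟩

/-- The kernel of contraction of a nonzero alternating (k+1)-form has small dimension. -/
private lemma finrank_ker_curryLeft {n k : ℕ}
    (φ : (Fin n → F) [⋀^Fin (k+1)]→ₗ[F] F) (hφ : φ ≠ 0) :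
    Module.finrank F (LinearMap.ker φ.curryLeft) + (k + 1) ≤ n := by
  classical
  obtain ⟨x, hx⟩ : ∃ x, φ x ≠ 0 := by
    by_contra h; push_neg at h; exact hφ (AlternatingMap.ext h)
  have hxind : LinearIndependent F x := by
    by_contra h; exact hx (φ.map_linearDependent x h)
  set N := LinearMap.ker φ.curryLeft with hNdef
  set S := Submodule.span F (Set.range x) with hSdef
  have hdisj : Disjoint N S := by
    rw [Submodule.disjoint_def]
    intro u huN huS
    rw [hSdef, Submodule.mem_span_range_iff_exists_fun] at huS
    obtain ⟨c, rfl⟩ := huS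
    have hc : ∀ j, c j = 0 := by
      intro j
      -- the evaluation linear map
      let L : (Fin n → F) →ₗ[F] F :=
        { toFun := fun u => φ (Fin.cons u (x ∘ j.succAbove))
          map_add' := fun a b => φ.map_vecCons_add _ _ _
          map_smul' := fun c a => φ.map_vecCons_smul _ _ _ }
      have hL0 : L (∑ i, c i • x i) = 0 := by
        have : (φ.curryLeft (∑ i, c i • x i)) (x ∘ j.succAbove) = 0 := by
          rw [LinearMap.mem_ker.mp huN]; rfl
        exact this
      have hLo : ∀ i, i ≠ j → L (x i) = 0 := by
        intro i hij
        obtain ⟨l, hl⟩ := Fin.exists_succAbove_eq hij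
        refine φ.map_eq_zero_of_eq _ (i := 0) (j := l.succ) ?_ (Fin.succ_ne_zero l).symm
        simp [Function.comp, hl]
      have hperm : Fin.cons (x j) (x ∘ j.succAbove) = x ∘ (Fin.cons j (Fin.succAbove j)) := by
        funext i
        induction i using Fin.cases with
        | zero => simp
        | succ l => simp
      have hbij : Function.Bijective (Fin.cons j (Fin.succAbove j) : Fin (k+1) → Fin (k+1)) := by
        rw [Fintype.bijective_iff_injective_and_card]
        refine ⟨?_, rfl⟩
        intro a b hab
        induction a using Fin.cases with
        | zero => induction b using Fin.cases with
          | zero => rfl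
          | succ l => simp only [Fin.cons_zero, Fin.cons_succ] at hab
                      exact absurd hab.symm (Fin.succAbove_ne j l)
        | succ l => induction b using Fin.cases with
          | zero => simp only [Fin.cons_zero, Fin.cons_succ] at hab
                    exact absurd hab (Fin.succAbove_ne j l)
          | succ l' => simp only [Fin.cons_succ] at hab
                       exact congrArg Fin.succ (Fin.succAbove_right_injective hab)
      have hLj : L (x j) ≠ 0 := by
        show φ (Fin.cons (x j) (x ∘ j.succAbove)) ≠ 0
        rw [hperm]
        have := φ.map_perm x (Equiv.ofBijective _ hbij)
        rw [show (x ∘ (Equiv.ofBijective _ hbij) : Fin (k+1) → Fin n → F)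
              = x ∘ (Fin.cons j (Fin.succAbove j)) from rfl] at this
        rw [this]
        rcases Int.units_eq_one_or (Equiv.Perm.sign (Equiv.ofBijective _ hbij)) with h | h
        · rw [h]; simpa using hx
        · rw [h]; simpa using hx
      have : (0:F) = c j * L (x j) := by
        rw [map_sum] at hL0
        rw [← hL0]
        rw [Finset.sum_eq_single j]
        · rw [map_smul]; simp [smul_eq_mul]
        · intro i _ hij; rw [map_smul, hLo i hij]; simp
        · intro h; exact absurd (Finset.mem_univ j) h
      rcases mul_eq_zero.mp this.symm with h | h
      · exact h
      · exact absurd h hLj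
    simp [hc]
  have hS : finrank F S = k + 1 := by
    rw [hSdef, finrank_span_eq_card hxind]; simp
  have := Submodule.finrank_add_finrank_le_of_disjoint hdisj
  rw [hS] at this
  have hE : finrank F (Fin n → F) = n := by simp
  omega

end Helpers

section Aux

variable {F : Type*} [Field F]

set_option maxHeartbeats 2000000 in
set_option synthInstance.maxHeartbeats 400000 in
private lemma aux_vanish (n : ℕ) :
    ∀ k : ℕ, k ≤ n →
    ∀ (φ : (Fin n → F) [⋀^Fin k]→ₗ[F] F), φ ≠ 0 →
    ∀ (V : Submodule F (Fin k → Fin n → F)) (s : Fin k → Fin n → F),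
      (∀ v ∈ V, φ (s + v) = 0) → Module.finrank F ↥V ≤ n * k - k := by
  intro k
  induction k with
  | zero =>
    intro _ φ hφ V s hvan
    have h0 : Module.finrank F (Fin 0 → Fin n → F) = 0 := by
      simp [Module.finrank_pi_fintype]
    have h2 := Submodule.finrank_le V
    omega
  | succ k ih =>
    intro hkn φ hφ V s hvan
    classical
    by_contra hbig
    push_neg at hbig
    set d := Module.finrank F ↥V with hd
    have hTot : Module.finrank F (Fin (k+1) → Fin n → F) = n * (k+1) := by
      simp [Module.finrank_pi_fintype, Finset.sum_const, mul_comm]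
    have hdle : d ≤ n * (k+1) := hTot ▸ Submodule.finrank_le V
    set N := LinearMap.ker φ.curryLeft with hNdef
    have hN : Module.finrank F ↥N + (k+1) ≤ n := finrank_ker_curryLeft φ hφ
    set π : (Fin (k+1) → Fin n → F) →ₗ[F] (Fin k → Fin n → F) :=
      LinearMap.funLeft F (Fin n → F) Fin.succ with hπdef
    set σ₀ : (Fin n → F) →ₗ[F] (Fin (k+1) → Fin n → F) :=
      LinearMap.single F (fun _ : Fin (k+1) => (Fin n → F)) 0 with hσdef
    have hσinj : Function.Injective σ₀ := by
      intro a b hab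
      have := congrFun hab 0
      simpa [hσdef] using this
    have hσker : ∀ e : Fin n → F, π (σ₀ e) = 0 := by
      intro e
      funext l
      show (σ₀ e) l.succ = 0
      simp [hσdef, Pi.single_eq_of_ne (Fin.succ_ne_zero l)]
    have hkerπ : ∀ w : Fin (k+1) → Fin n → F, π w = 0 → σ₀ (w 0) = w := by
      intro w hw
      funext i
      induction i using Fin.cases with
      | zero => simp [hσdef]
      | succ l =>
        have h2 : w l.succ = 0 := by
          have := congrFun hw l
          simpa [hπdef, LinearMap.funLeft_apply] using this
        rw [hσdef]
        simp [LinearMap.single_apply, Pi.single_eq_of_ne (Fin.succ_ne_zero l), h2]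
    set U : Submodule F (Fin n → F) := V.comap σ₀ with hUdef
    have hUmap : U.map σ₀ = V ⊓ LinearMap.ker π := by
      ext w
      constructor
      · rintro ⟨e, he, rfl⟩
        exact ⟨he, LinearMap.mem_ker.mpr (hσker e)⟩
      · rintro ⟨hwV, hwk⟩
        have hw := hkerπ w (LinearMap.mem_ker.mp hwk)
        refine ⟨w 0, ?_, hw⟩
        show σ₀ (w 0) ∈ V
        rw [hw]; exact hwV
    have hUrank : Module.finrank F ↥U = Module.finrank F ↥(V ⊓ LinearMap.ker π) := by
      rw [← hUmap]; exact (Submodule.equivMapOfInjective σ₀ hσinj U).finrank_eq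
    set m := Module.finrank F ↥(V ⊓ LinearMap.ker π) with hm
    have hrn : Module.finrank F ↥(V.map π) + m = d := by
      set_option synthInstance.maxHeartbeats 1000000 in
      have h1 := LinearMap.finrank_range_add_finrank_ker (π.domRestrict V)
      rw [LinearMap.range_domRestrict] at h1
      have h2 : Module.finrank F ↥(LinearMap.ker (π.domRestrict V)) = m := by
        rw [LinearMap.ker_domRestrict V π]
        have h3 : Module.finrank F ↥(Submodule.comap V.subtype (LinearMap.ker π))
            = Module.finrank F
              ↥(Submodule.map V.subtype (Submodule.comap V.subtype (LinearMap.ker π))) :=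
          LinearEquiv.finrank_eq (Submodule.equivMapOfInjective V.subtype
            (Submodule.injective_subtype V) (Submodule.comap V.subtype (LinearMap.ker π)))
        rw [Submodule.map_comap_subtype] at h3
        rw [h3]
      rw [h2] at h1
      exact h1
    set r := Module.finrank F ↥(V.map π) with hr
    have hrle : r ≤ n * k := by
      have h4 : Module.finrank F (Fin k → Fin n → F) = n * k := by
        simp [Module.finrank_pi_fintype, Finset.sum_const, mul_comm]
      exact h4 ▸ Submodule.finrank_le _
    have hkermap : (⊤ : Submodule F (Fin n → F)).map σ₀ = LinearMap.ker π := by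
      ext w
      constructor
      · rintro ⟨e, -, rfl⟩
        exact LinearMap.mem_ker.mpr (hσker e)
      · intro hw
        exact ⟨w 0, Submodule.mem_top, hkerπ w (LinearMap.mem_ker.mp hw)⟩
    have hkrank : Module.finrank F ↥(LinearMap.ker π) = n := by
      rw [← hkermap, ← (Submodule.equivMapOfInjective σ₀ hσinj ⊤).finrank_eq]
      rw [finrank_top]
      simp
    have hmul : n * (k+1) = n * k + n := by ring
    have hn1 : 0 < n := lt_of_lt_of_le (Nat.succ_pos k) hkn
    have hk1n : k + 1 ≤ n * (k+1) := Nat.le_mul_of_pos_left (k+1) hn1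
    have hkn2 : k ≤ n * k := Nat.le_mul_of_pos_left k hn1
    have hbig2 : n * k + n ≤ d + k := by omega
    -- key vanishing transfer
    have keyvan : ∀ u : Fin n → F, σ₀ u ∈ V →
        ∀ v' ∈ V.map π, (φ.curryLeft u) (π s + v') = 0 := by
      intro u hu v' hv'
      obtain ⟨v, hv, rfl⟩ := hv'
      have h1 : φ (s + v) = 0 := hvan v hv
      have h2 : φ (s + v + σ₀ u) = 0 := by
        rw [add_assoc]
        exact hvan _ (V.add_mem hv hu)
      set w := s + v with hw
      have hcons1 : Fin.cons (w 0) (w ∘ Fin.succ) = w := by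
        funext i
        induction i using Fin.cases with
        | zero => simp
        | succ l => simp
      have hcons2 : Fin.cons (w 0 + u) (w ∘ Fin.succ) = w + σ₀ u := by
        funext i
        induction i using Fin.cases with
        | zero => simp [hσdef]
        | succ l =>
          rw [hσdef]
          simp [LinearMap.single_apply, Pi.single_eq_of_ne (Fin.succ_ne_zero l)]
      have hπs : π s + π v = w ∘ Fin.succ := by rw [← map_add]; rfl
      rw [hπs]
      have hadd := φ.curryLeft.map_add (w 0) u
      have h5 := congrArg (fun (g : (Fin n → F) [⋀^Fin k]→ₗ[F] F) => g (w ∘ Fin.succ)) hadd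
      simp only [AlternatingMap.add_apply] at h5
      have e1 : (φ.curryLeft (w 0 + u)) (w ∘ Fin.succ) = 0 := by
        show φ (Fin.cons (w 0 + u) (w ∘ Fin.succ)) = 0
        rw [hcons2]; exact h2
      have e2 : (φ.curryLeft (w 0)) (w ∘ Fin.succ) = 0 := by
        show φ (Fin.cons (w 0) (w ∘ Fin.succ)) = 0
        rw [hcons1]; exact h1
      rw [e1, e2] at h5
      simpa using h5.symm
    by_cases hker : LinearMap.ker π ≤ V
    · -- case B
      rcases Nat.eq_zero_or_pos k with rfl | hkpos
      · have hVtop : V = ⊤ := by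
          rw [eq_top_iff]; intro w _
          refine hker ?_
          rw [LinearMap.mem_ker]
          exact Subsingleton.elim _ _
        refine hφ ?_
        ext y
        have h6 := hvan (y - s) (hVtop ▸ Submodule.mem_top)
        simpa using h6
      · have hmn : m = n := by
          have h7 : V ⊓ LinearMap.ker π = LinearMap.ker π := inf_eq_right.mpr hker
          rw [hm, h7, hkrank]
        set B : Submodule F (Fin n → F) :=
          ⨅ α : Fin k,
            Submodule.comap (LinearMap.single F (fun _ : Fin k => (Fin n → F)) α) (V.map π)
          with hB
        have hBne : B ≠ ⊤ := by
          intro htop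
          have hVπtop : V.map π = ⊤ := by
            rw [eq_top_iff]; intro y _
            have hy : y = ∑ α : Fin k, Pi.single α (y α) := (Finset.univ_sum_single y).symm
            rw [hy]
            refine Submodule.sum_mem _ fun α _ => ?_
            have h8 : (y α) ∈ B := htop ▸ Submodule.mem_top
            rw [hB, Submodule.mem_iInf] at h8
            exact h8 α
          have hVtop : V = ⊤ := by
            rw [eq_top_iff]; intro w _
            have h9 : π w ∈ V.map π := hVπtop ▸ Submodule.mem_top
            obtain ⟨v, hv, hpv⟩ := h9
            have h10 : w - v ∈ LinearMap.ker π := by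
              rw [LinearMap.mem_ker, map_sub, hpv, sub_self]
            have h11 := V.add_mem hv (hker h10)
            simpa using h11
          refine hφ ?_
          ext y
          have h12 := hvan (y - s) (hVtop ▸ Submodule.mem_top)
          simpa using h12
        have hNne : N ≠ ⊤ := by
          intro htop
          rw [htop, finrank_top] at hN
          simp only [Module.finrank_pi, Fintype.card_fin] at hN
          omega
        obtain ⟨u, huN, huB⟩ := exists_not_mem_two hNne hBne
        obtain ⟨α, hα⟩ : ∃ α : Fin k, Pi.single α u ∉ V.map π := by
          by_contra h
          push_neg at h
          exact huB (by rw [hB, Submodule.mem_iInf]; exact fun α => h α)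
        have hu0 : σ₀ u ∈ V := hker (LinearMap.mem_ker.mpr (hσker u))
        set ψ := φ.curryLeft u with hψdef
        have hψ : ψ ≠ 0 := fun h => huN (LinearMap.mem_ker.mpr h)
        set x₁ : Fin k → (Fin n → F) := Pi.single α u with hx₁def
        have hx₁ne : x₁ ≠ 0 := by
          intro h
          apply hα
          rw [h]
          exact zero_mem _
        have hdisj2 : Disjoint (V.map π) (Submodule.span F {x₁}) := by
          rw [Submodule.disjoint_def]
          intro z hz1 hz2
          rw [Submodule.mem_span_singleton] at hz2
          obtain ⟨t, rfl⟩ := hz2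
          rcases eq_or_ne t 0 with rfl | ht
          · simp
          · exfalso
            apply hα
            have h16 := (V.map π).smul_mem t⁻¹ hz1
            rwa [smul_smul, inv_mul_cancel₀ ht, one_smul] at h16
        have hsum : Module.finrank F ↥(V.map π ⊔ Submodule.span F {x₁}) = r + 1 := by
          have h17 := Submodule.finrank_sup_add_finrank_inf_eq (V.map π) (Submodule.span F {x₁})
          rw [hdisj2.eq_bot, finrank_bot, finrank_span_singleton hx₁ne] at h17
          omega
        have hvanplus : ∀ v' ∈ V.map π ⊔ Submodule.span F {x₁}, ψ (π s + v') = 0 := by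
          intro v' hv'
          rw [Submodule.mem_sup] at hv'
          obtain ⟨y', hy', z, hz, rfl⟩ := hv'
          rw [Submodule.mem_span_singleton] at hz
          obtain ⟨t, rfl⟩ := hz
          set y := π s + y' with hy
          have hy0 : ψ y = 0 := keyvan u hu0 y' hy'
          have hupd : π s + (y' + t • x₁) = Function.update y α (y α + t • u) := by
            funext β
            rcases eq_or_ne β α with rfl | hβ
            · simp [hy, hx₁def, add_assoc]
            · simp [hy, hx₁def, Function.update_of_ne hβ, Pi.single_eq_of_ne hβ]
          rw [hupd, ψ.map_update_add, Function.update_eq_self, ψ.map_update_smul]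
          have hzero : ψ (Function.update y α u) = 0 := by
            have hrfl : ψ (Function.update y α u) = φ (Fin.cons u (Function.update y α u)) := rfl
            rw [hrfl]
            refine φ.map_eq_zero_of_eq _ (i := (0 : Fin (k+1))) (j := α.succ)
              ?_ (Fin.succ_ne_zero α).symm
            simp
          rw [hy0, hzero]
          simp
        have hIH := ih (le_trans (Nat.le_succ k) hkn) ψ hψ
          (V.map π ⊔ Submodule.span F {x₁}) (π s) hvanplus
        rw [hsum] at hIH
        omega
    · -- case A
      have hmlt : m < n := by
        have hlt : V ⊓ LinearMap.ker π < LinearMap.ker π :=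
          lt_of_le_of_ne inf_le_right (fun h => hker (h ▸ inf_le_left))
        calc m < Module.finrank F ↥(LinearMap.ker π) :=
              Submodule.finrank_lt_finrank_of_lt hlt
          _ = n := hkrank
      have hUN : ¬ (U ≤ N) := by
        intro hle
        have h13 : Module.finrank F ↥U ≤ Module.finrank F ↥N := Submodule.finrank_mono hle
        rw [hUrank] at h13
        omega
      obtain ⟨u, huU, huN⟩ : ∃ u, u ∈ U ∧ u ∉ N := by
        by_contra h
        push_neg at h
        exact hUN h
      have hu0 : σ₀ u ∈ V := huU
      set ψ := φ.curryLeft u with hψdef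
      have hψ : ψ ≠ 0 := fun h => huN (LinearMap.mem_ker.mpr h)
      rcases Nat.eq_zero_or_pos k with rfl | hkpos
      · have h14 : n * 0 = 0 := by ring
        have h15 : n * (0+1) = n := by ring
        omega
      · have hIH := ih (le_trans (Nat.le_succ k) hkn) ψ hψ (V.map π) (π s) (keyvan u hu0)
        omega

end Aux

section Glue

variable {F : Type*} [Field F] {n k : ℕ}

private lemma altSum_apply' {ι' ι M N R : Type*} [Fintype ι] [CommSemiring R] [AddCommMonoid M]
    [Module R M] [AddCommMonoid N] [Module R N]
    (s : Finset ι') (f : ι' → M [⋀^ι]→ₗ[R] N) (v : ι → M) :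
    (∑ i ∈ s, f i) v = ∑ i ∈ s, f i v := by
  induction s using Finset.cons_induction with
  | empty => simp
  | cons a s ha ih => simp [Finset.sum_cons, ih]

/-- The Cullis determinant as an alternating form in the columns. -/
noncomputable def cullisForm (F : Type*) [Field F] (n k : ℕ) :
    (Fin n → F) [⋀^Fin k]→ₗ[F] F :=
  ∑ c : {s : Finset (Fin n) // s.card = k},
    ((-1 : F) ^ (∑ α : Fin k, ((c.1.orderEmbOfFin c.2 α : ℕ) - (α : ℕ)))) •
      (Matrix.detRowAlternating.compLinearMap
        (LinearMap.funLeft F F (⇑(c.1.orderEmbOfFin c.2))))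

private lemma cullisForm_apply (X : Matrix (Fin n) (Fin k) F) :
    cullisForm F n k (fun α i => X i α) = cullisDet X := by
  rw [cullisForm, cullisDet]
  rw [altSum_apply']
  refine Finset.sum_congr rfl fun c _ => ?_
  rw [AlternatingMap.smul_apply, AlternatingMap.compLinearMap_apply]
  rw [smul_eq_mul]
  congr 1
  have h1 : (Matrix.detRowAlternating
        fun β => (LinearMap.funLeft F F (⇑(c.1.orderEmbOfFin c.2))) fun i => X i β)
      = ((X.submatrix (⇑(c.1.orderEmbOfFin c.2)) id).transpose).det := rfl
  rw [h1, Matrix.det_transpose]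

private lemma cullisDet_indicator (hkn : k ≤ n) :
    cullisDet (fun (i : Fin n) (α : Fin k) => if (i : ℕ) = (α : ℕ) then (1 : F) else 0) = 1 := by
  classical
  set X₀ : Matrix (Fin n) (Fin k) F :=
    fun i α => if (i : ℕ) = (α : ℕ) then (1 : F) else 0 with hX₀
  set c₀ : {s : Finset (Fin n) // s.card = k} :=
    ⟨Finset.map (Fin.castLEOrderEmb hkn).toEmbedding Finset.univ, by simp⟩ with hc₀
  have hemb : ⇑(c₀.1.orderEmbOfFin c₀.2) = Fin.castLE hkn := by
    have := Finset.orderEmbOfFin_unique' c₀.2 (f := Fin.castLEOrderEmb hkn)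
      (fun x => by simp [hc₀]; exact ⟨x, rfl⟩)
    rw [← this]
    rfl
  rw [cullisDet]
  rw [Fintype.sum_eq_single c₀]
  · rw [hemb]
    have hexp : (∑ α : Fin k, ((Fin.castLE hkn α : ℕ) - (α : ℕ))) = 0 := by
      refine Finset.sum_eq_zero fun α _ => ?_
      simp
    rw [hexp, pow_zero, one_mul]
    have hid : X₀.submatrix (Fin.castLE hkn) id = 1 := by
      ext α β
      by_cases h : α = β
      · subst h; rw [Matrix.submatrix_apply]; simp [hX₀, Matrix.one_apply]
      · have : ¬((α : ℕ) = (β : ℕ)) := fun hc => h (Fin.ext hc)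
        rw [Matrix.submatrix_apply]; simp [hX₀, Matrix.one_apply, h, this]
    rw [hid, Matrix.det_one]
  · intro c hc
    obtain ⟨i, hic, hik⟩ : ∃ i ∈ c.1, k ≤ (i : ℕ) := by
      by_contra h
      push_neg at h
      apply hc
      have hsub : c.1 ⊆ c₀.1 := by
        intro i hi
        have hlt : (i : ℕ) < k := h i hi
        simp only [hc₀, Finset.mem_map]
        exact ⟨⟨(i : ℕ), hlt⟩, Finset.mem_univ _, by
          ext
          rfl⟩
      have : c.1 = c₀.1 := Finset.eq_of_subset_of_card_le hsub (by rw [c.2, c₀.2])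
      exact Subtype.ext this
    obtain ⟨α₀, hα₀⟩ : ∃ α₀ : Fin k, c.1.orderEmbOfFin c.2 α₀ = i := by
      have : (i : Fin n) ∈ Set.range (c.1.orderEmbOfFin c.2) := by
        rw [Finset.range_orderEmbOfFin]
        exact hic
      exact this
    apply mul_eq_zero_of_right
    apply Matrix.det_eq_zero_of_row_eq_zero α₀
    intro β
    rw [Matrix.submatrix_apply, hα₀]
    have : ¬((i : ℕ) = (β : ℕ)) := by
      have := β.isLt
      omega
    simp [hX₀, this]

end Glue

/-- If K = s + V is a linear variety of n × k matrices on which the Cullis determinant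
vanishes identically, then the codimension of K is at least k, i.e. dim V ≤ nk − k. -/
theorem finrank_le_of_cullisDet_eq_zero {F : Type*} [Field F] {n k : ℕ}
    (hk : 1 ≤ k) (hkn : k ≤ n)
    (V : Submodule F (Matrix (Fin n) (Fin k) F)) (s : Matrix (Fin n) (Fin k) F)
    (hdet : ∀ v ∈ V, cullisDet (s + v) = 0) :
    Module.finrank F V ≤ n * k - k := by
  classical
  set Φ := cullisForm F n k with hPhidef
  have hPhine : Φ ≠ 0 := by
    intro h
    have h1 := cullisForm_apply
      (fun (i : Fin n) (α : Fin k) => if (i : ℕ) = (α : ℕ) then (1 : F) else 0)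
    rw [cullisDet_indicator hkn, ← hPhidef, h] at h1
    simp at h1
  let T : Matrix (Fin n) (Fin k) F →ₗ[F] (Fin k → Fin n → F) :=
    { toFun := fun X => fun α i => X i α
      map_add' := fun X Y => rfl
      map_smul' := fun c X => rfl }
  have hTinj : Function.Injective T := by
    intro X Y h
    funext i α
    exact congrFun (congrFun h α) i
  have hfr : Module.finrank F V = Module.finrank F (V.map T) :=
    LinearEquiv.finrank_eq (Submodule.equivMapOfInjective T hTinj V)
  rw [hfr]
  refine aux_vanish n k hkn Φ hPhine (V.map T) (T s) ?_
  rintro _ ⟨v, hv, rfl⟩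
  have h2 : T s + T v = T (s + v) := (map_add T s v).symm
  rw [h2]
  exact (cullisForm_apply (s + v)).trans (hdet v hv)
end

section
/- Let z ∈ F^n with z₁ = −1, and let K = {X ∈ M_{n×k}(F) : zᵗX = 0}. Then det_{n,k}(X) = 0 for all X ∈ K if and only if for every k-element subset c of {2,…,n}: 1 + Σ_{α=1}^{k} z_{c(α)} (−1)^{α − c(α)} = 0, where c(1) < … < c(k) enumerate c. -/
open Finset Matrix

namespace CullisAux

set_option linter.unusedSectionVars false

variable {F : Type*} [Field F] {n : ℕ}

lemma strictMono_le' {k : ℕ} {f : Fin k → Fin n} (hf : StrictMono f) :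
    ∀ t (ht : t < k), t ≤ (f ⟨t, ht⟩ : ℕ) := by
  intro t
  induction t with
  | zero => intro _; exact Nat.zero_le _
  | succ t ih =>
    intro ht
    have h1 : t < k := by omega
    have h3 : f ⟨t, h1⟩ < f ⟨t + 1, ht⟩ := hf (by simp [Fin.lt_def])
    have h2 := ih h1
    rw [Fin.lt_def] at h3
    omega

lemma strictMono_le {k : ℕ} {f : Fin k → Fin n} (hf : StrictMono f) (α : Fin k) :
    (α : ℕ) ≤ (f α : ℕ) := by
  have := strictMono_le' hf α.1 α.2
  simpa using this

lemma neg_one_pow_sub {a b : ℕ} (h : b ≤ a) : (-1 : F) ^ (a - b) = (-1) ^ a * (-1) ^ b := by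
  conv_rhs => rw [← Nat.sub_add_cancel h, pow_add, mul_assoc, ← mul_pow]
  simp

lemma sum_val_eq {k : ℕ} (s : Finset (Fin n)) (hs : s.card = k) :
    (∑ x ∈ s, (x : ℕ)) = ∑ α : Fin k, ((s.orderEmbOfFin hs α : ℕ)) := by
  refine (Finset.sum_bij (fun (α : Fin k) _ => s.orderEmbOfFin hs α) ?_ ?_ ?_ ?_).symm
  · intro α _; exact Finset.orderEmbOfFin_mem s hs α
  · intro a _ b _ h; exact (s.orderEmbOfFin hs).injective h
  · intro x hx
    have : x ∈ Set.range (s.orderEmbOfFin hs) := by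
      rw [Finset.range_orderEmbOfFin]; exact hx
    obtain ⟨α, hα⟩ := this
    exact ⟨α, Finset.mem_univ _, hα⟩
  · intro α _; rfl

lemma eps_eq {k : ℕ} (s : Finset (Fin n)) (hs : s.card = k) :
    (-1 : F) ^ (∑ α : Fin k, ((s.orderEmbOfFin hs α : ℕ) - (α : ℕ)))
      = (-1) ^ (∑ x ∈ s, (x : ℕ)) * (-1) ^ (∑ α : Fin k, (α : ℕ)) := by
  calc (-1 : F) ^ (∑ α : Fin k, ((s.orderEmbOfFin hs α : ℕ) - (α : ℕ)))
      = ∏ α : Fin k, (-1 : F) ^ ((s.orderEmbOfFin hs α : ℕ) - (α : ℕ)) :=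
        (Finset.prod_pow_eq_pow_sum _ _ _).symm
    _ = ∏ α : Fin k, ((-1 : F) ^ (s.orderEmbOfFin hs α : ℕ) * (-1) ^ (α : ℕ)) :=
        Finset.prod_congr rfl fun α _ =>
          neg_one_pow_sub (strictMono_le (s.orderEmbOfFin hs).strictMono α)
    _ = (∏ α : Fin k, (-1 : F) ^ (s.orderEmbOfFin hs α : ℕ)) * ∏ α : Fin k, (-1 : F) ^ (α : ℕ) :=
        Finset.prod_mul_distrib
    _ = (-1) ^ (∑ x ∈ s, (x : ℕ)) * (-1) ^ (∑ α : Fin k, (α : ℕ)) := by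
        rw [Finset.prod_pow_eq_pow_sum, Finset.prod_pow_eq_pow_sum, sum_val_eq s hs]

lemma cycleRange_symm_val {m : ℕ} (i : Fin (m + 1)) {β : Fin (m + 1)} (hβ : β ≠ 0) :
    ((i.cycleRange.symm β : Fin (m + 1)) : ℕ) = if β ≤ i then (β : ℕ) - 1 else (β : ℕ) := by
  set x := i.cycleRange.symm β with hx
  have hβx : β = i.cycleRange x := by simp [hx]
  rcases lt_trichotomy x i with h | h | h
  · have hb : (β : ℕ) = (x : ℕ) + 1 := by rw [hβx, Fin.coe_cycleRange_of_lt h]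
    rw [if_pos]
    · omega
    · rw [Fin.le_def, hb]
      exact h
  · exfalso; apply hβ; rw [hβx, h, Fin.cycleRange_self]
  · have hb : β = x := by rw [hβx, Fin.cycleRange_of_gt h]
    rw [if_neg]
    · rw [hb]
    · rw [hb]; exact not_le.mpr h

lemma cycleRange_symm_lt {m : ℕ} (i : Fin (m + 1)) {β γ : Fin (m + 1)} (hβ : β ≠ 0)
    (h : β < γ) : i.cycleRange.symm β < i.cycleRange.symm γ := by
  have hγ : γ ≠ 0 := by
    intro hh; subst hh; exact absurd h (by simp [Fin.lt_def])
  have hb : (β : ℕ) ≠ 0 := by intro h; apply hβ; ext; simp [h]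
  have h1 := cycleRange_symm_val i hβ
  have h2 := cycleRange_symm_val i hγ
  rw [Fin.lt_def] at h ⊢
  rw [h1, h2]
  simp only [Fin.le_def] at *
  split_ifs <;> omega

variable {F : Type*} [Field F] {n : ℕ}

lemma orderEmbOfFin_congr {α : Type*} [LinearOrder α] {s t : Finset α} (h : s = t) {k : ℕ}
    (hs : s.card = k) (x : Fin k) :
    s.orderEmbOfFin hs x = t.orderEmbOfFin (h ▸ hs) x := by subst h; rfl

lemma orderIso_symm_emb {α : Type*} [LinearOrder α] {s : Finset α} {k : ℕ} (hs : s.card = k)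
    (x : Fin k) (h : s.orderEmbOfFin hs x ∈ s) :
    (s.orderIsoOfFin hs).symm ⟨s.orderEmbOfFin hs x, h⟩ = x := by
  rw [OrderIso.symm_apply_eq]
  exact Subtype.ext (Finset.coe_orderIsoOfFin_apply s hs x).symm

lemma emb_orderIso_symm {α : Type*} [LinearOrder α] {s : Finset α} {k : ℕ} (hs : s.card = k)
    {x : α} (hx : x ∈ s) :
    s.orderEmbOfFin hs ((s.orderIsoOfFin hs).symm ⟨x, hx⟩) = x := by
  rw [← Finset.coe_orderIsoOfFin_apply, OrderIso.apply_symm_apply]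

section Lift
variable {m : ℕ} (hn : 0 < n) (s : Finset (Fin n)) (hs : s.card = m + 1)
  (h0 : (⟨0, hn⟩ : Fin n) ∉ s) (α₀ : Fin (m + 1))

lemma d_card (h0 : (⟨0, hn⟩ : Fin n) ∉ s) :
    (insert (⟨0, hn⟩ : Fin n) (s.erase (s.orderEmbOfFin hs α₀))).card = m + 1 := by
  rw [Finset.card_insert_of_notMem (fun h => h0 (Finset.mem_of_mem_erase h)),
    Finset.card_erase_of_mem (Finset.orderEmbOfFin_mem s hs α₀), hs]
  omega

lemma emb_d (h0 : (⟨0, hn⟩ : Fin n) ∉ s) :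
    ⇑((insert (⟨0, hn⟩ : Fin n) (s.erase (s.orderEmbOfFin hs α₀))).orderEmbOfFin
        (d_card hn s hs α₀ h0))
      = Function.update (⇑(s.orderEmbOfFin hs) ∘ ⇑α₀.cycleRange.symm) 0 ⟨0, hn⟩ := by
  symm
  apply Finset.orderEmbOfFin_unique
  · intro β
    by_cases hb : β = 0
    · subst hb
      rw [Function.update_self]
      exact Finset.mem_insert_self _ _
    · rw [Function.update_of_ne hb]
      refine Finset.mem_insert_of_mem (Finset.mem_erase.mpr ⟨?_, Finset.orderEmbOfFin_mem _ _ _⟩)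
      intro hc
      apply hb
      have := (s.orderEmbOfFin hs).injective hc
      have h2 : α₀.cycleRange.symm β = α₀.cycleRange.symm 0 := by
        rw [this, Fin.cycleRange_symm_zero]
      exact α₀.cycleRange.symm.injective h2
  · intro β γ hlt
    by_cases hb : β = 0
    · subst hb
      have hg : γ ≠ 0 := by rintro rfl; exact absurd hlt (lt_irrefl _)
      rw [Function.update_self, Function.update_of_ne hg]
      have hne : s.orderEmbOfFin hs (α₀.cycleRange.symm γ) ≠ ⟨0, hn⟩ := by
        intro hh
        exact h0 (hh ▸ Finset.orderEmbOfFin_mem s hs _)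
      rw [Fin.lt_def]
      have h3 : ((s.orderEmbOfFin hs (α₀.cycleRange.symm γ)) : ℕ) ≠ 0 := by
        simpa [Fin.ext_iff] using hne
      have h4 : ((⟨0, hn⟩ : Fin n) : ℕ) = 0 := rfl
      simp only [Function.comp_apply]
      omega
    · have hg : γ ≠ 0 := by
        rintro rfl
        exact Fin.not_lt_zero _ hlt
      rw [Function.update_of_ne hb, Function.update_of_ne hg]
      exact (s.orderEmbOfFin hs).strictMono (cycleRange_symm_lt α₀ hb hlt)

lemma emb_d_update (h0 : (⟨0, hn⟩ : Fin n) ∉ s) :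
    Function.update
        (⇑((insert (⟨0, hn⟩ : Fin n) (s.erase (s.orderEmbOfFin hs α₀))).orderEmbOfFin
          (d_card hn s hs α₀ h0))) 0 (s.orderEmbOfFin hs α₀)
      = ⇑(s.orderEmbOfFin hs) ∘ ⇑α₀.cycleRange.symm := by
  rw [emb_d hn s hs α₀ h0, Function.update_idem]
  have h1 : (⇑(s.orderEmbOfFin hs) ∘ ⇑α₀.cycleRange.symm) 0 = s.orderEmbOfFin hs α₀ := by
    simp [Fin.cycleRange_symm_zero]
  rw [← h1, Function.update_eq_self]

lemma d_sum (h0 : (⟨0, hn⟩ : Fin n) ∉ s) :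
    (∑ x ∈ insert (⟨0, hn⟩ : Fin n) (s.erase (s.orderEmbOfFin hs α₀)), (x : ℕ))
        + (s.orderEmbOfFin hs α₀ : ℕ)
      = ∑ x ∈ s, (x : ℕ) := by
  rw [Finset.sum_insert (fun h => h0 (Finset.mem_of_mem_erase h))]
  have h4 : ((⟨0, hn⟩ : Fin n) : ℕ) = 0 := rfl
  rw [h4, zero_add, Finset.sum_erase_add s _ (Finset.orderEmbOfFin_mem s hs α₀)]

end Lift

lemma emb_zero {m : ℕ} (hn : 0 < n) (s : Finset (Fin n)) (hs : s.card = m + 1)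
    (h0 : (⟨0, hn⟩ : Fin n) ∈ s) : s.orderEmbOfFin hs 0 = ⟨0, hn⟩ := by
  have h1 : s.orderEmbOfFin hs ⟨0, Nat.succ_pos m⟩ = s.min' (Finset.card_pos.mp (hs.symm ▸ Nat.succ_pos m)) :=
    Finset.orderEmbOfFin_zero hs (Nat.succ_pos m)
  have h2 : s.min' (Finset.card_pos.mp (hs.symm ▸ Nat.succ_pos m)) = ⟨0, hn⟩ := by
    refine le_antisymm (Finset.min'_le _ _ h0) ?_
    exact Fin.mk_le_of_le_val (Nat.zero_le _)
  have h3 : (0 : Fin (m + 1)) = ⟨0, Nat.succ_pos m⟩ := rfl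
  rw [h3, h1, h2]

lemma det_updateRow_finset_sum {p : Type*} [DecidableEq p] [Fintype p] {ι : Type*}
    (M : Matrix p p F) (r : p) (t : Finset ι) (v : ι → p → F) :
    (M.updateRow r (∑ i ∈ t, v i)).det = ∑ i ∈ t, (M.updateRow r (v i)).det := by
  classical
  induction t using Finset.induction_on with
  | empty =>
    rw [Finset.sum_empty, Finset.sum_empty]
    exact Matrix.det_eq_zero_of_row_eq_zero r (fun j => by simp)
  | insert _ _ h ih =>
    rw [Finset.sum_insert h, Matrix.det_updateRow_add, ih, Finset.sum_insert h]

lemma updateRow_submatrix {k : ℕ} (X : Matrix (Fin n) (Fin k) F) (f : Fin k → Fin n)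
    (b : Fin k) (i : Fin n) :
    (X.submatrix f id).updateRow b (X i) = X.submatrix (Function.update f b i) id := by
  ext β j
  by_cases hb : β = b
  · subst hb; simp [Matrix.updateRow_self, Function.update_self]
  · simp [Matrix.updateRow_ne hb, Function.update_of_ne hb]

lemma row_relation {m : ℕ} (hn : 0 < n) (z : Fin n → F) (hz : z ⟨0, hn⟩ = -1)
    (X : Matrix (Fin n) (Fin (m + 1)) F) (hX : Matrix.vecMul z X = 0) :
    X ⟨0, hn⟩ = ∑ i : Fin n, (if i = ⟨0, hn⟩ then 0 else z i) • X i := by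
  funext j
  have h1 : ∑ i : Fin n, z i * X i j = 0 := by
    have := congrFun hX j
    simpa [Matrix.vecMul, dotProduct] using this
  have h2 : ∀ i : Fin n, (if i = ⟨0, hn⟩ then (0:F) else z i) * X i j
      = z i * X i j - (if i = (⟨0, hn⟩ : Fin n) then z i * X i j else 0) := by
    intro i; split_ifs <;> ring
  rw [Finset.sum_apply]
  simp only [Pi.smul_apply, smul_eq_mul]
  rw [Finset.sum_congr rfl fun i _ => h2 i, Finset.sum_sub_distrib, h1,
    Finset.sum_ite_eq' Finset.univ (⟨0, hn⟩ : Fin n) (fun i => z i * X i j)]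
  simp [hz]

lemma step1 {m : ℕ} (hn : 0 < n) (z : Fin n → F)
    (X : Matrix (Fin n) (Fin (m + 1)) F)
    (hrow : X ⟨0, hn⟩ = ∑ i : Fin n, (if i = ⟨0, hn⟩ then 0 else z i) • X i)
    (c : Finset (Fin n)) (hc : c.card = m + 1) (hc0 : (⟨0, hn⟩ : Fin n) ∈ c) (ε : F) :
    ε * (X.submatrix (⇑(c.orderEmbOfFin hc)) id).det
      = ∑ i ∈ Finset.univ \ c,
          ε * (z i * (X.submatrix (Function.update (⇑(c.orderEmbOfFin hc)) 0 i) id).det) := by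
  have h00 : c.orderEmbOfFin hc 0 = ⟨0, hn⟩ := emb_zero hn c hc hc0
  have hM : X.submatrix (⇑(c.orderEmbOfFin hc)) id
      = (X.submatrix (⇑(c.orderEmbOfFin hc)) id).updateRow 0 (X ⟨0, hn⟩) := by
    rw [show X (⟨0, hn⟩ : Fin n) = (X.submatrix (⇑(c.orderEmbOfFin hc)) id) 0 from
      by funext j; simp [h00], Matrix.updateRow_eq_self]
  have e1 : (X.submatrix (⇑(c.orderEmbOfFin hc)) id).det
      = ∑ i : Fin n, (if i = ⟨0, hn⟩ then 0 else z i) *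
          (X.submatrix (Function.update (⇑(c.orderEmbOfFin hc)) 0 i) id).det := by
    conv_lhs => rw [hM, hrow]
    rw [det_updateRow_finset_sum]
    refine Finset.sum_congr rfl fun i _ => ?_
    rw [Matrix.det_updateRow_smul, updateRow_submatrix]
  have e2 : ∀ i ∈ (Finset.univ : Finset (Fin n)), i ∉ Finset.univ \ c →
      (if i = ⟨0, hn⟩ then (0:F) else z i) *
        (X.submatrix (Function.update (⇑(c.orderEmbOfFin hc)) 0 i) id).det = 0 := by
    intro i _ hi
    have hic : i ∈ c := by simpa using hi
    by_cases hiz : i = ⟨0, hn⟩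
    · rw [if_pos hiz, zero_mul]
    · rw [if_neg hiz]
      have hr : i ∈ Set.range (c.orderEmbOfFin hc) := by
        rw [Finset.range_orderEmbOfFin]; exact hic
      obtain ⟨β, hβ⟩ := hr
      have hβ0 : β ≠ 0 := by rintro rfl; rw [h00] at hβ; exact hiz hβ.symm
      have hdet : (X.submatrix (Function.update (⇑(c.orderEmbOfFin hc)) 0 i) id).det = 0 := by
        apply Matrix.det_zero_of_row_eq (Ne.symm hβ0)
        funext j
        simp [Matrix.submatrix_apply, Function.update_apply, hβ, hβ0]
      rw [hdet, mul_zero]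
  rw [e1, ← Finset.sum_subset (Finset.sdiff_subset) e2, Finset.mul_sum]
  refine Finset.sum_congr rfl fun i hi => ?_
  have : i ≠ ⟨0, hn⟩ := by
    rintro rfl; exact (Finset.mem_sdiff.mp hi).2 hc0
  rw [if_neg this]

lemma c'_card {m : ℕ} {d : Finset (Fin n)} (hd : d.card = m + 1) {z0 : Fin n} (h0 : z0 ∈ d)
    {i : Fin n} (hi : i ∉ d) : (insert i (d.erase z0)).card = m + 1 := by
  rw [Finset.card_insert_of_notMem (fun h => hi (Finset.mem_of_mem_erase h)),
    Finset.card_erase_of_mem h0, hd]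
  omega

lemma key_s15 {m : ℕ} (hn : 0 < n) (z : Fin n → F) (X : Matrix (Fin n) (Fin (m + 1)) F) :
    ∑ a ∈ (Finset.univ.filter
        (fun c : {s : Finset (Fin n) // s.card = m + 1} => (⟨0, hn⟩ : Fin n) ∉ c.1)).sigma
        (fun _ => (Finset.univ : Finset (Fin (m + 1)))),
      ((-1 : F) ^ (∑ α : Fin (m + 1), ((a.1.1.orderEmbOfFin a.1.2 α : ℕ) - (α : ℕ))) *
        (z (a.1.1.orderEmbOfFin a.1.2 a.2) *
          ((-1 : F) ^ ((a.1.1.orderEmbOfFin a.1.2 a.2 : ℕ) - (a.2 : ℕ)) *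
            (X.submatrix (⇑(a.1.1.orderEmbOfFin a.1.2)) id).det)))
    = ∑ b ∈ (Finset.univ.filter
        (fun c : {s : Finset (Fin n) // s.card = m + 1} => (⟨0, hn⟩ : Fin n) ∈ c.1)).sigma
        (fun c => Finset.univ \ c.1),
      ((-1 : F) ^ (∑ α : Fin (m + 1), ((b.1.1.orderEmbOfFin b.1.2 α : ℕ) - (α : ℕ))) *
        (z b.2 *
          (X.submatrix (Function.update (⇑(b.1.1.orderEmbOfFin b.1.2)) 0 b.2) id).det)) := by
  refine Finset.sum_bij'
    (fun a ha => ⟨⟨insert (⟨0, hn⟩ : Fin n) (a.1.1.erase (a.1.1.orderEmbOfFin a.1.2 a.2)),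
        d_card hn a.1.1 a.1.2 a.2 ((Finset.mem_filter.mp (Finset.mem_sigma.mp ha).1).2)⟩,
      a.1.1.orderEmbOfFin a.1.2 a.2⟩)
    (fun b hb => ⟨⟨insert b.2 (b.1.1.erase (⟨0, hn⟩ : Fin n)),
        c'_card b.1.2 ((Finset.mem_filter.mp (Finset.mem_sigma.mp hb).1).2)
          ((Finset.mem_sdiff.mp (Finset.mem_sigma.mp hb).2).2)⟩,
      (Finset.orderIsoOfFin _ (c'_card b.1.2 ((Finset.mem_filter.mp (Finset.mem_sigma.mp hb).1).2)
          ((Finset.mem_sdiff.mp (Finset.mem_sigma.mp hb).2).2))).symm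
        ⟨b.2, Finset.mem_insert_self _ _⟩⟩)
    ?_ ?_ ?_ ?_ ?_
  · -- hi : image in sigma-in
    rintro ⟨⟨c, hc⟩, α₀⟩ ha
    dsimp only
    have h0 : (⟨0, hn⟩ : Fin n) ∉ c := (Finset.mem_filter.mp (Finset.mem_sigma.mp ha).1).2
    refine Finset.mem_sigma.mpr ⟨Finset.mem_filter.mpr ⟨Finset.mem_univ _, Finset.mem_insert_self _ _⟩, ?_⟩
    refine Finset.mem_sdiff.mpr ⟨Finset.mem_univ _, ?_⟩
    intro hmem
    rcases Finset.mem_insert.mp hmem with h | h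
    · exact h0 (h ▸ Finset.orderEmbOfFin_mem c hc α₀)
    · exact (Finset.notMem_erase _ _) h
  · -- hj
    rintro ⟨⟨d, hd⟩, i⟩ hb
    dsimp only
    have h0 : (⟨0, hn⟩ : Fin n) ∈ d := (Finset.mem_filter.mp (Finset.mem_sigma.mp hb).1).2
    have hi : i ∉ d := (Finset.mem_sdiff.mp (Finset.mem_sigma.mp hb).2).2
    refine Finset.mem_sigma.mpr ⟨Finset.mem_filter.mpr ⟨Finset.mem_univ _, ?_⟩, Finset.mem_univ _⟩
    intro hmem
    rcases Finset.mem_insert.mp hmem with h | h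
    · exact hi (h ▸ h0)
    · exact (Finset.notMem_erase _ _) h
  · -- left_inv : j (i a) = a
    rintro ⟨⟨c, hc⟩, α₀⟩ ha
    dsimp only
    have h0 : (⟨0, hn⟩ : Fin n) ∉ c := (Finset.mem_filter.mp (Finset.mem_sigma.mp ha).1).2
    have hmem : c.orderEmbOfFin hc α₀ ∈ c := Finset.orderEmbOfFin_mem c hc α₀
    have h1 : (⟨0, hn⟩ : Fin n) ∉ c.erase (c.orderEmbOfFin hc α₀) :=
      fun h => h0 (Finset.mem_of_mem_erase h)
    have hDc : insert (c.orderEmbOfFin hc α₀)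
        ((insert (⟨0, hn⟩ : Fin n) (c.erase (c.orderEmbOfFin hc α₀))).erase (⟨0, hn⟩ : Fin n))
        = c := by
      rw [Finset.erase_insert h1, Finset.insert_erase hmem]
    refine Sigma.ext (Subtype.ext hDc) (heq_of_eq ?_)
    rw [OrderIso.symm_apply_eq]
    refine Subtype.ext ?_
    rw [Finset.coe_orderIsoOfFin_apply]
    exact (orderEmbOfFin_congr hDc _ α₀).symm
  · -- right_inv : i (j b) = b
    rintro ⟨⟨d, hd⟩, i⟩ hb
    dsimp only
    have h0 : (⟨0, hn⟩ : Fin n) ∈ d := (Finset.mem_filter.mp (Finset.mem_sigma.mp hb).1).2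
    have hi : i ∉ d := (Finset.mem_sdiff.mp (Finset.mem_sigma.mp hb).2).2
    have hie : i ∉ d.erase (⟨0, hn⟩ : Fin n) := fun h => hi (Finset.mem_of_mem_erase h)
    have hemb := emb_orderIso_symm
      (c'_card hd h0 hi) (Finset.mem_insert_self i (d.erase (⟨0, hn⟩ : Fin n)))
    refine Sigma.ext (Subtype.ext ?_) (heq_of_eq ?_)
    · show insert (⟨0, hn⟩ : Fin n) ((insert i (d.erase ⟨0, hn⟩)).erase
          ((insert i (d.erase ⟨0, hn⟩)).orderEmbOfFin (c'_card hd h0 hi)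
            (((insert i (d.erase ⟨0, hn⟩)).orderIsoOfFin (c'_card hd h0 hi)).symm
              ⟨i, Finset.mem_insert_self _ _⟩))) = d
      rw [hemb, Finset.erase_insert hie, Finset.insert_erase h0]
    · exact hemb
  · -- term equality
    rintro ⟨⟨c, hc⟩, α₀⟩ ha
    have h0 : (⟨0, hn⟩ : Fin n) ∉ c := (Finset.mem_filter.mp (Finset.mem_sigma.mp ha).1).2
    simp only
    rw [emb_d_update hn c hc α₀ h0]
    have hsub : X.submatrix (⇑(c.orderEmbOfFin hc) ∘ ⇑α₀.cycleRange.symm) id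
        = (X.submatrix (⇑(c.orderEmbOfFin hc)) id).submatrix (⇑α₀.cycleRange.symm) id := by
      rw [Matrix.submatrix_submatrix]; rfl
    rw [hsub, Matrix.det_permute]
    have hsgn : ((Equiv.Perm.sign (α₀.cycleRange.symm) : ℤ) : F) = (-1) ^ (α₀ : ℕ) := by
      rw [Equiv.Perm.sign_symm, Fin.sign_cycleRange]
      push_cast
      ring
    rw [hsgn]
    rw [eps_eq c hc, eps_eq _ (d_card hn c hc α₀ h0)]
    have hs1 := d_sum hn c hc α₀ h0
    have hle : (α₀ : ℕ) ≤ ((c.orderEmbOfFin hc α₀ : Fin n) : ℕ) :=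
      strictMono_le (c.orderEmbOfFin hc).strictMono α₀
    have hpow : (-1 : F) ^ (∑ x ∈ c, (x : ℕ)) *
          (-1) ^ ((c.orderEmbOfFin hc α₀ : ℕ) - (α₀ : ℕ))
        = (-1) ^ (∑ x ∈ insert (⟨0, hn⟩ : Fin n) (c.erase (c.orderEmbOfFin hc α₀)), (x : ℕ)) *
          (-1) ^ (α₀ : ℕ) := by
      rw [← pow_add, ← pow_add]
      conv_lhs => rw [neg_one_pow_eq_pow_mod_two]
      conv_rhs => rw [neg_one_pow_eq_pow_mod_two]
      congr 1
      omega
    linear_combination ((-1 : F) ^ (∑ α : Fin (m + 1), (α : ℕ)) * z (c.orderEmbOfFin hc α₀) *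
      (X.submatrix (⇑(c.orderEmbOfFin hc)) id).det) * hpow

lemma main_formula {m : ℕ} (hn : 0 < n) (z : Fin n → F) (hz : z ⟨0, hn⟩ = -1)
    (X : Matrix (Fin n) (Fin (m + 1)) F) (hX : Matrix.vecMul z X = 0) :
    cullisDet X = ∑ c : {s : Finset (Fin n) // s.card = m + 1},
      if (⟨0, hn⟩ : Fin n) ∈ c.1 then 0 else
        (-1 : F) ^ (∑ α : Fin (m + 1), ((c.1.orderEmbOfFin c.2 α : ℕ) - (α : ℕ))) *
          ((1 + ∑ α : Fin (m + 1), z (c.1.orderEmbOfFin c.2 α) *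
              (-1 : F) ^ ((c.1.orderEmbOfFin c.2 α : ℕ) - (α : ℕ))) *
            (X.submatrix (⇑(c.1.orderEmbOfFin c.2)) id).det) := by
  classical
  have hrow := row_relation hn z hz X hX
  set S := {s : Finset (Fin n) // s.card = m + 1}
  -- abbreviations as functions
  set eps : S → F := fun c =>
    (-1 : F) ^ (∑ α : Fin (m + 1), ((c.1.orderEmbOfFin c.2 α : ℕ) - (α : ℕ))) with heps
  set D : S → F := fun c => (X.submatrix (⇑(c.1.orderEmbOfFin c.2)) id).det with hD
  set T : S → F := fun c => ∑ α : Fin (m + 1), z (c.1.orderEmbOfFin c.2 α) *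
      (-1 : F) ^ ((c.1.orderEmbOfFin c.2 α : ℕ) - (α : ℕ)) with hT
  have lhs_split : cullisDet X
      = (∑ c : S, if (⟨0, hn⟩ : Fin n) ∈ c.1 then eps c * D c else 0)
        + ∑ c : S, (if (⟨0, hn⟩ : Fin n) ∈ c.1 then 0 else eps c * D c) := by
    rw [← Finset.sum_add_distrib]
    unfold cullisDet
    refine Finset.sum_congr rfl fun c _ => ?_
    split_ifs <;> simp [heps, hD]
  have rhs_split : (∑ c : S,
      if (⟨0, hn⟩ : Fin n) ∈ c.1 then (0:F) else eps c * ((1 + T c) * D c))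
      = (∑ c : S, if (⟨0, hn⟩ : Fin n) ∈ c.1 then (0:F) else eps c * D c)
        + ∑ c : S, (if (⟨0, hn⟩ : Fin n) ∈ c.1 then (0:F) else eps c * (T c * D c)) := by
    rw [← Finset.sum_add_distrib]
    refine Finset.sum_congr rfl fun c _ => ?_
    split_ifs <;> ring
  have KEY : (∑ c : S, if (⟨0, hn⟩ : Fin n) ∈ c.1 then eps c * D c else 0)
      = ∑ c : S, (if (⟨0, hn⟩ : Fin n) ∈ c.1 then (0:F) else eps c * (T c * D c)) := by
    rw [← Finset.sum_filter]
    have h1 : ∀ c : S, (if (⟨0, hn⟩ : Fin n) ∈ c.1 then (0:F) else eps c * (T c * D c))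
        = (if (⟨0, hn⟩ : Fin n) ∉ c.1 then eps c * (T c * D c) else 0) := by
      intro c; by_cases h : (⟨0, hn⟩ : Fin n) ∈ c.1 <;> simp [h]
    rw [Finset.sum_congr rfl fun c _ => h1 c, ← Finset.sum_filter]
    -- expand both sides to double sums
    have hL : ∀ c ∈ Finset.univ.filter (fun c : S => (⟨0, hn⟩ : Fin n) ∈ c.1),
        eps c * D c = ∑ i ∈ Finset.univ \ c.1,
          eps c * (z i * (X.submatrix (Function.update (⇑(c.1.orderEmbOfFin c.2)) 0 i) id).det) := by
      intro c hcm
      exact step1 hn z X hrow c.1 c.2 (Finset.mem_filter.mp hcm).2 (eps c)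
    have hR : ∀ c ∈ Finset.univ.filter (fun c : S => (⟨0, hn⟩ : Fin n) ∉ c.1),
        eps c * (T c * D c) = ∑ α : Fin (m + 1),
          eps c * (z (c.1.orderEmbOfFin c.2 α) *
            ((-1 : F) ^ ((c.1.orderEmbOfFin c.2 α : ℕ) - (α : ℕ)) * D c)) := by
      intro c _
      rw [hT]
      dsimp only
      rw [Finset.sum_mul, Finset.mul_sum]
      exact Finset.sum_congr rfl fun α _ => by ring
    rw [Finset.sum_congr rfl hL, Finset.sum_congr rfl hR,
      Finset.sum_sigma', Finset.sum_sigma']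
    exact (key_s15 hn z X).symm
  have hrfl : (∑ c : S, if (⟨0, hn⟩ : Fin n) ∈ c.1 then (0:F) else
      eps c * ((1 + T c) * D c))
      = ∑ c : {s : Finset (Fin n) // s.card = m + 1},
    if (⟨0, hn⟩ : Fin n) ∈ c.1 then (0:F) else
      (-1 : F) ^ (∑ α : Fin (m + 1), ((c.1.orderEmbOfFin c.2 α : ℕ) - (α : ℕ))) *
        ((1 + ∑ α : Fin (m + 1), z (c.1.orderEmbOfFin c.2 α) *
            (-1 : F) ^ ((c.1.orderEmbOfFin c.2 α : ℕ) - (α : ℕ))) *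
          (X.submatrix (⇑(c.1.orderEmbOfFin c.2)) id).det) := rfl
  rw [lhs_split, KEY, ← hrfl, rhs_split]
  exact add_comm _ _

end CullisAux

/-- Let z ∈ F^n with z₁ = −1 and K = {X : zᵗX = 0}. Then the Cullis determinant vanishes
on all of K iff for every k-element subset c of {2,…,n} one has
1 + Σ_α z_{c(α)} (−1)^{α − c(α)} = 0. -/
theorem cullisDet_zero_on_rowRelation_iff {F : Type*} [Field F] {n k : ℕ}
    (hk : 1 ≤ k) (hkn : k ≤ n) (z : Fin n → F)
    (hz : z ⟨0, hk.trans hkn⟩ = -1) :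
    (∀ X : Matrix (Fin n) (Fin k) F, Matrix.vecMul z X = 0 → cullisDet X = 0) ↔
      ∀ (c : Finset (Fin n)) (hc : c.card = k), (⟨0, hk.trans hkn⟩ : Fin n) ∉ c →
        1 + ∑ α : Fin k, z (c.orderEmbOfFin hc α) *
            (-1 : F) ^ ((c.orderEmbOfFin hc α : ℕ) - (α : ℕ)) = 0 := by
  classical
  obtain ⟨m, rfl⟩ : ∃ m, k = m + 1 := ⟨k - 1, by omega⟩
  constructor
  · intro H c hc hc0
    set X : Matrix (Fin n) (Fin (m + 1)) F := fun i j =>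
      (if i = ⟨0, hk.trans hkn⟩ then z (c.orderEmbOfFin hc j) else 0) +
        (if i = c.orderEmbOfFin hc j then 1 else 0) with hXdef
    have hemb_ne : ∀ j, c.orderEmbOfFin hc j ≠ ⟨0, hk.trans hkn⟩ :=
      fun j h => hc0 (h ▸ Finset.orderEmbOfFin_mem c hc j)
    have hXK : Matrix.vecMul z X = 0 := by
      funext j
      have h1 : Matrix.vecMul z X j = ∑ i : Fin n, z i * X i j := by
        simp [Matrix.vecMul, dotProduct]
      have h2 : ∀ i : Fin n, z i * X i j
          = (if i = (⟨0, hk.trans hkn⟩ : Fin n) then z i * z (c.orderEmbOfFin hc j) else 0)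
            + (if i = c.orderEmbOfFin hc j then z i * 1 else 0) := by
        intro i
        rw [hXdef]
        dsimp only
        split_ifs <;> ring
      rw [h1, Finset.sum_congr rfl fun i _ => h2 i, Finset.sum_add_distrib,
        Finset.sum_ite_eq' Finset.univ (⟨0, hk.trans hkn⟩ : Fin n),
        Finset.sum_ite_eq' Finset.univ (c.orderEmbOfFin hc j)]
      simp [hz]
    have hdet1 : (X.submatrix (⇑(c.orderEmbOfFin hc)) id).det = 1 := by
      have : X.submatrix (⇑(c.orderEmbOfFin hc)) id = 1 := by
        ext β j
        rw [Matrix.submatrix_apply, hXdef]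
        dsimp only [id]
        rw [if_neg (hemb_ne β)]
        by_cases h : β = j
        · subst h; simp [Matrix.one_apply]
        · rw [if_neg fun hh => h ((c.orderEmbOfFin hc).injective hh)]
          simp [Matrix.one_apply, h]
      rw [this, Matrix.det_one]
    have h0 := H X hXK
    rw [CullisAux.main_formula (hk.trans hkn) z hz X hXK] at h0
    rw [Fintype.sum_eq_single (⟨c, hc⟩ : {s : Finset (Fin n) // s.card = m + 1})] at h0
    · rw [if_neg hc0, hdet1, mul_one] at h0
      rcases mul_eq_zero.mp h0 with h | h
      · exact absurd h (pow_ne_zero _ (by norm_num))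
      · exact h
    · intro b hb
      by_cases hbz : (⟨0, hk.trans hkn⟩ : Fin n) ∈ b.1
      · rw [if_pos hbz]
      · rw [if_neg hbz]
        have hnsub : ¬ b.1 ⊆ c := by
          intro hsub
          exact hb (Subtype.ext (Finset.eq_of_subset_of_card_le hsub (by rw [hc, b.2])))
        obtain ⟨x, hxb, hxc⟩ := Finset.not_subset.mp hnsub
        have hr : x ∈ Set.range (b.1.orderEmbOfFin b.2) := by
          rw [Finset.range_orderEmbOfFin]; exact hxb
        obtain ⟨β, hβ⟩ := hr
        have hdet0 : (X.submatrix (⇑(b.1.orderEmbOfFin b.2)) id).det = 0 := by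
          apply Matrix.det_eq_zero_of_row_eq_zero β
          intro j
          rw [Matrix.submatrix_apply, hXdef]
          dsimp only [id]
          have hx1 : x ≠ (⟨0, hk.trans hkn⟩ : Fin n) := fun h => hbz (h ▸ hxb)
          have hx2 : x ≠ c.orderEmbOfFin hc j :=
            fun h => hxc (h ▸ Finset.orderEmbOfFin_mem c hc j)
          rw [hβ, if_neg hx1, if_neg hx2]
          ring
        rw [hdet0, mul_zero, mul_zero]
  · intro H X hXK
    rw [CullisAux.main_formula (hk.trans hkn) z hz X hXK]
    refine Finset.sum_eq_zero fun c _ => ?_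
    by_cases h : (⟨0, hk.trans hkn⟩ : Fin n) ∈ c.1
    · rw [if_pos h]
    · rw [if_neg h, H c.1 c.2 h, zero_mul, mul_zero]
end

section
/- Let k be odd and n ≥ k, and let K ⊆ M_{n×k}(F) be the subspace of all matrices whose alternating row sum vanishes, i.e., Σ_{i=1}^{n} (−1)^i X[i] = 0 where X[i] denotes the i-th row. Then K has codimension k in M_{n×k}(F) and det_{n,k}(X) = 0 for every X ∈ K. -/
open Finset Matrix

namespace CullisAux

lemma sum_neg_one_pow_odd {F : Type*} [CommRing F] {k : ℕ} (hodd : Odd k) :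
    ∑ α : Fin k, (-1 : F) ^ (α : ℕ) = 1 := by
  rw [Fin.sum_univ_eq_sum_range]
  obtain ⟨m, rfl⟩ := hodd
  induction m with
  | zero => simp
  | succ m ih =>
    have : 2 * (m + 1) + 1 = (2 * m + 1) + 1 + 1 := by ring
    rw [this, Finset.sum_range_succ, Finset.sum_range_succ, ih]
    have h1 : Odd (2 * m + 1) := ⟨m, rfl⟩
    have h2 : Even (2 * m + 1 + 1) := ⟨m + 1, by ring⟩
    rw [h1.neg_one_pow, h2.neg_one_pow]
    ring

lemma det_updateRow_sum_gen {F : Type*} [CommRing F] {m ι : Type*} [DecidableEq m] [Fintype m]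
    [DecidableEq ι] (M : Matrix m m F) (j : m) (t : Finset ι) (c : ι → F) (v : ι → m → F) :
    (M.updateRow j (∑ i ∈ t, c i • v i)).det = ∑ i ∈ t, c i * (M.updateRow j (v i)).det := by
  induction t using Finset.induction_on with
  | empty =>
    simp only [Finset.sum_empty]
    exact Matrix.det_eq_zero_of_row_eq_zero j (by simp)
  | insert x t hx ih =>
    rw [Finset.sum_insert hx, Finset.sum_insert hx, Matrix.det_updateRow_add,
      Matrix.det_updateRow_smul, ih]

lemma le_orderEmbOfFin {n k : ℕ} (s : Finset (Fin n)) (h : s.card = k) (α : Fin k) :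
    (α : ℕ) ≤ (s.orderEmbOfFin h α : ℕ) := by
  have hsm : StrictMono (fun a : Fin k => ((s.orderEmbOfFin h a : Fin n) : ℕ)) := by
    intro a b hab
    exact (s.orderEmbOfFin h).strictMono hab
  have : ∀ m : ℕ, ∀ hm : m < k, m ≤ ((s.orderEmbOfFin h ⟨m, hm⟩ : Fin n) : ℕ) := by
    intro m
    induction m with
    | zero => intro _; exact Nat.zero_le _
    | succ p ih =>
      intro hm
      have hp : p < k := Nat.lt_of_succ_lt hm
      have h1 := ih hp
      have h2 : ((s.orderEmbOfFin h ⟨p, hp⟩ : Fin n) : ℕ)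
          < ((s.orderEmbOfFin h ⟨p + 1, hm⟩ : Fin n) : ℕ) := hsm (by simp [Fin.lt_def])
      omega
  exact this α α.2

lemma finset_eq_map {α : Type*} [LinearOrder α] (s : Finset α) {m : ℕ} (h : s.card = m) :
    s = Finset.univ.map (s.orderEmbOfFin h).toEmbedding := by
  apply Finset.coe_injective
  simp [Set.image_univ]

lemma sum_over_finset {α : Type*} [LinearOrder α] {M : Type*} [AddCommMonoid M]
    (s : Finset α) {m : ℕ} (h : s.card = m) (f : α → M) :
    ∑ x ∈ s, f x = ∑ α : Fin m, f (s.orderEmbOfFin h α) := by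
  conv_lhs => rw [finset_eq_map s h]
  rw [Finset.sum_map]
  rfl

lemma sum_orderEmbOfFin {n k : ℕ} (s : Finset (Fin n)) (h : s.card = k) :
    ∑ α : Fin k, ((s.orderEmbOfFin h α : Fin n) : ℕ) = ∑ x ∈ s, (x : ℕ) :=
  (sum_over_finset s h (fun x => (x : ℕ))).symm

lemma sign_eq {F : Type*} [CommRing F] {n k : ℕ} (s : Finset (Fin n)) (h : s.card = k) :
    (-1 : F) ^ (∑ α : Fin k, ((s.orderEmbOfFin h α : ℕ) - (α : ℕ)))
      = (-1) ^ (∑ x ∈ s, (x : ℕ)) * (-1) ^ (∑ α : Fin k, (α : ℕ)) := by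
  have key : (∑ α : Fin k, ((s.orderEmbOfFin h α : ℕ) - (α : ℕ))) + (∑ α : Fin k, (α : ℕ))
      = ∑ x ∈ s, (x : ℕ) := by
    rw [← Finset.sum_add_distrib, ← sum_orderEmbOfFin s h]
    exact Finset.sum_congr rfl fun α _ => Nat.sub_add_cancel (le_orderEmbOfFin s h α)
  have h2 : ((-1 : F) ^ (∑ α : Fin k, (α : ℕ))) * ((-1 : F) ^ (∑ α : Fin k, (α : ℕ))) = 1 := by
    rw [← pow_add]
    exact Even.neg_one_pow ⟨_, rfl⟩
  calc (-1 : F) ^ (∑ α : Fin k, ((s.orderEmbOfFin h α : ℕ) - (α : ℕ)))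
      = (-1 : F) ^ (∑ α : Fin k, ((s.orderEmbOfFin h α : ℕ) - (α : ℕ)))
        * (((-1 : F) ^ (∑ α : Fin k, (α : ℕ))) * ((-1 : F) ^ (∑ α : Fin k, (α : ℕ)))) := by
        rw [h2, mul_one]
    _ = (-1 : F) ^ (∑ x ∈ s, (x : ℕ)) * (-1) ^ (∑ α : Fin k, (α : ℕ)) := by
        rw [← mul_assoc, ← pow_add, key]

variable {n k' : ℕ} [NeZero n]

lemma card_insert_zero_erase (d : Finset (Fin n)) (hd : d.card = k' + 1)
    (h0 : (0 : Fin n) ∉ d) {i : Fin n} (hi : i ∈ d) :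
    (insert (0 : Fin n) (d.erase i)).card = k' + 1 := by
  rw [Finset.card_insert_of_notMem (fun h => h0 (Finset.mem_of_mem_erase h)),
    Finset.card_erase_of_mem hi, hd]
  omega

lemma orderEmbOfFin_insert_zero_erase (d : Finset (Fin n)) (hd : d.card = k' + 1)
    (h0 : (0 : Fin n) ∉ d) (α : Fin (k' + 1))
    (hc : (insert (0 : Fin n) (d.erase (d.orderEmbOfFin hd α))).card = k' + 1) (β : Fin (k' + 1)) :
    (insert (0 : Fin n) (d.erase (d.orderEmbOfFin hd α))).orderEmbOfFin hc β
      = Fin.cases (0 : Fin n) (fun β' => d.orderEmbOfFin hd (α.succAbove β')) β := by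
  have hfs : ∀ x : Fin (k' + 1),
      (Fin.cases (0 : Fin n) (fun β' => d.orderEmbOfFin hd (α.succAbove β')) x : Fin n)
        ∈ insert (0 : Fin n) (d.erase (d.orderEmbOfFin hd α)) := by
    intro x
    induction x using Fin.cases with
    | zero => simp
    | succ β' =>
      simp only [Fin.cases_succ]
      refine Finset.mem_insert_of_mem (Finset.mem_erase.2 ⟨?_, Finset.orderEmbOfFin_mem _ _ _⟩)
      exact (d.orderEmbOfFin hd).injective.ne (Fin.succAbove_ne α β')
  have hmono : StrictMono (fun x : Fin (k' + 1) =>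
      (Fin.cases (0 : Fin n) (fun β' => d.orderEmbOfFin hd (α.succAbove β')) x : Fin n)) := by
    intro a b hab
    induction b using Fin.cases with
    | zero => exact absurd hab (Fin.not_lt_zero a)
    | succ b' =>
      induction a using Fin.cases with
      | zero =>
        simp only [Fin.cases_zero, Fin.cases_succ]
        refine (Fin.pos_iff_ne_zero' _).mpr ?_
        intro h
        exact h0 (h ▸ Finset.orderEmbOfFin_mem _ _ _)
      | succ a' =>
        simp only [Fin.cases_succ]
        exact (d.orderEmbOfFin hd).strictMono
          (Fin.strictMono_succAbove α (Fin.succ_lt_succ_iff.mp hab))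
  exact (congrFun (Finset.orderEmbOfFin_unique hc hfs hmono) β).symm

lemma updateRow_submatrix_eq {F : Type*} [CommRing F] (X : Matrix (Fin n) (Fin (k' + 1)) F)
    (d : Finset (Fin n)) (hd : d.card = k' + 1) (h0 : (0 : Fin n) ∉ d) (α : Fin (k' + 1))
    (hc : (insert (0 : Fin n) (d.erase (d.orderEmbOfFin hd α))).card = k' + 1) :
    Matrix.updateRow
        (X.submatrix (⇑((insert (0 : Fin n) (d.erase (d.orderEmbOfFin hd α))).orderEmbOfFin hc)) id)
        0 (X (d.orderEmbOfFin hd α))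
      = X.submatrix (⇑(d.orderEmbOfFin hd) ∘ ⇑(Fin.cycleRange α).symm) id := by
  ext β γ
  induction β using Fin.cases with
  | zero =>
    rw [Matrix.updateRow_self]
    simp [Fin.cycleRange_symm_zero]
  | succ β' =>
    rw [Matrix.updateRow_ne (Fin.succ_ne_zero β')]
    simp only [Matrix.submatrix_apply, Function.comp_apply, id_eq,
      Fin.cycleRange_symm_succ]
    rw [orderEmbOfFin_insert_zero_erase d hd h0 α hc]
    simp

lemma det_updateRow_eq {F : Type*} [CommRing F] (X : Matrix (Fin n) (Fin (k' + 1)) F)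
    (d : Finset (Fin n)) (hd : d.card = k' + 1) (h0 : (0 : Fin n) ∉ d) (α : Fin (k' + 1))
    (hc : (insert (0 : Fin n) (d.erase (d.orderEmbOfFin hd α))).card = k' + 1) :
    (Matrix.updateRow
        (X.submatrix (⇑((insert (0 : Fin n) (d.erase (d.orderEmbOfFin hd α))).orderEmbOfFin hc)) id)
        0 (X (d.orderEmbOfFin hd α))).det
      = (-1 : F) ^ (α : ℕ) * (X.submatrix (⇑(d.orderEmbOfFin hd)) id).det := by
  rw [updateRow_submatrix_eq X d hd h0 α hc]
  have : X.submatrix (⇑(d.orderEmbOfFin hd) ∘ ⇑(Fin.cycleRange α).symm) id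
      = (X.submatrix (⇑(d.orderEmbOfFin hd)) id).submatrix
          (⇑((Fin.cycleRange α).symm : Equiv.Perm (Fin (k' + 1)))) id := by
    ext β γ; simp
  rw [this, Matrix.det_permute, Equiv.Perm.sign_symm, Fin.sign_cycleRange]
  norm_num

noncomputable def embF {n m : ℕ} [NeZero n] (s : Finset (Fin n)) : Fin m → Fin n :=
  if h : s.card = m then ⇑(s.orderEmbOfFin h) else fun _ => 0

lemma embF_eq {n m : ℕ} [NeZero n] {s : Finset (Fin n)} (h : s.card = m) :
    (embF s : Fin m → Fin n) = ⇑(s.orderEmbOfFin h) := by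
  rw [embF, dif_pos h]

lemma card_insert_erase {α : Type*} [DecidableEq α] {s : Finset α} {a b : α}
    (ha : a ∈ s) (hb : b ∉ s) : (insert b (s.erase a)).card = s.card := by
  have h1 : 0 < s.card := Finset.card_pos.mpr ⟨a, ha⟩
  rw [Finset.card_insert_of_notMem (fun h => hb (Finset.mem_of_mem_erase h)),
    Finset.card_erase_of_mem ha]
  omega

lemma sum_val_insert_zero_erase {d : Finset (Fin n)} (h0 : (0 : Fin n) ∉ d) {i : Fin n}
    (hi : i ∈ d) :
    (∑ x ∈ insert (0 : Fin n) (d.erase i), (x : ℕ)) + (i : ℕ) = ∑ x ∈ d, (x : ℕ) := by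
  rw [Finset.sum_insert (fun h => h0 (Finset.mem_of_mem_erase h)), Fin.val_zero, zero_add,
    Finset.sum_erase_add _ _ hi]

lemma embF_zero {s : Finset (Fin n)} (h : s.card = k' + 1) (h0 : (0 : Fin n) ∈ s) :
    (embF s : Fin (k' + 1) → Fin n) 0 = 0 := by
  rw [embF_eq h]
  have h1 := Finset.orderEmbOfFin_zero h (Nat.succ_pos k')
  have h00 : (⟨0, Nat.succ_pos k'⟩ : Fin (k' + 1)) = 0 := rfl
  rw [h00] at h1
  rw [h1]
  exact le_antisymm (Finset.min'_le _ _ h0) (Fin.zero_le _)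

theorem key_sum {F : Type*} [CommRing F] (hodd : Odd (k' + 1))
    (X : Matrix (Fin n) (Fin (k' + 1)) F)
    (hrow : X 0 = ∑ i ∈ Finset.univ.erase (0 : Fin n), ((-1 : F) ^ ((i : ℕ) + 1)) • X i) :
    ∑ c : {s : Finset (Fin n) // s.card = k' + 1},
      (-1 : F) ^ (∑ x ∈ c.1, (x : ℕ)) * (X.submatrix (⇑(c.1.orderEmbOfFin c.2)) id).det = 0 := by
  classical
  let u : Finset (Fin n) → F := fun s =>
    (-1) ^ (∑ x ∈ s, (x : ℕ)) * (X.submatrix (embF s : Fin (k' + 1) → Fin n) id).det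
  let t : Finset (Fin n) → Fin n → F := fun s i =>
    (-1) ^ (∑ x ∈ s, (x : ℕ)) *
      ((-1) ^ ((i : ℕ) + 1) *
        (Matrix.updateRow (X.submatrix (embF s : Fin (k' + 1) → Fin n) id) 0 (X i)).det)
  have hgoal : ∀ c : {s : Finset (Fin n) // s.card = k' + 1},
      (-1 : F) ^ (∑ x ∈ c.1, (x : ℕ)) * (X.submatrix (⇑(c.1.orderEmbOfFin c.2)) id).det
        = u c.1 := by
    intro c; simp only [u]; rw [embF_eq c.2]
  rw [Finset.sum_congr rfl fun c _ => hgoal c]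
  rw [← Finset.sum_filter_add_sum_filter_not Finset.univ
    (fun c : {s : Finset (Fin n) // s.card = k' + 1} => (0 : Fin n) ∈ c.1)]
  set A := Finset.univ.filter
    (fun c : {s : Finset (Fin n) // s.card = k' + 1} => (0 : Fin n) ∈ c.1) with hA
  set B := Finset.univ.filter
    (fun c : {s : Finset (Fin n) // s.card = k' + 1} => (0 : Fin n) ∉ c.1) with hB
  -- Step 1: expansion of each term of the A-sum
  have expand : ∀ c ∈ A, u c.1 = ∑ i ∈ (c.1)ᶜ, t c.1 i := by
    intro c hc
    have h0c : (0 : Fin n) ∈ c.1 := (Finset.mem_filter.mp hc).2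
    have hM0 : (X.submatrix (embF c.1 : Fin (k' + 1) → Fin n) id) 0 = X 0 := by
      funext γ; rw [Matrix.submatrix_apply, embF_zero c.2 h0c]; rfl
    have step1 : (X.submatrix (embF c.1 : Fin (k' + 1) → Fin n) id).det
        = ∑ i ∈ Finset.univ.erase (0 : Fin n), (-1 : F) ^ ((i : ℕ) + 1) *
            (Matrix.updateRow (X.submatrix (embF c.1 : Fin (k' + 1) → Fin n) id) 0 (X i)).det := by
      conv_lhs => rw [show X.submatrix (embF c.1 : Fin (k' + 1) → Fin n) id
        = Matrix.updateRow (X.submatrix (embF c.1 : Fin (k' + 1) → Fin n) id) 0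
            (∑ i ∈ Finset.univ.erase (0 : Fin n), ((-1 : F) ^ ((i : ℕ) + 1)) • X i) from by
          rw [← hrow, ← hM0, Matrix.updateRow_eq_self]]
      exact det_updateRow_sum_gen _ 0 _ _ (fun i => X i)
    show u c.1 = _
    simp only [u, t]
    rw [step1, Finset.mul_sum]
    refine (Finset.sum_subset ?_ ?_).symm
    · intro x hx
      rw [Finset.mem_compl] at hx
      exact Finset.mem_erase.2 ⟨fun h => hx (h ▸ h0c), Finset.mem_univ x⟩
    · intro x hx hxc
      rw [Finset.mem_compl, not_not] at hxc
      have hx0 : x ≠ 0 := (Finset.mem_erase.mp hx).1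
      obtain ⟨β, hβ⟩ : ∃ β, c.1.orderEmbOfFin c.2 β = x := by
        have hmem : x ∈ Set.range (⇑(c.1.orderEmbOfFin c.2)) := by
          rw [Finset.range_orderEmbOfFin]; exact hxc
        exact hmem
      have hembz : c.1.orderEmbOfFin c.2 0 = 0 := by
        have h' := embF_zero c.2 h0c
        rwa [embF_eq c.2] at h'
      have hβ0 : (0 : Fin (k' + 1)) ≠ β := fun h => hx0 (by rw [← hβ, ← h, hembz])
      have hdet : (Matrix.updateRow (X.submatrix (embF c.1 : Fin (k' + 1) → Fin n) id) 0
          (X x)).det = 0 := by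
        apply Matrix.det_zero_of_row_eq hβ0
        rw [Matrix.updateRow_self, Matrix.updateRow_ne (Ne.symm hβ0)]
        funext γ
        rw [Matrix.submatrix_apply, embF_eq c.2, hβ]
        rfl
      rw [hdet, mul_zero, mul_zero]
  -- helper for sigma equality
  have sigma_ext : ∀ (a b : {s : Finset (Fin n) // s.card = k' + 1}) (x y : Fin n),
      a = b → x = y →
        (⟨a, x⟩ : Σ _ : {s : Finset (Fin n) // s.card = k' + 1}, Fin n) = ⟨b, y⟩ := by
    rintro a b x y rfl rfl; rfl
  -- Step 2: the bijection
  have hbij : ∑ p ∈ A.sigma (fun c => (c.1)ᶜ), t p.1.1 p.2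
      = ∑ q ∈ B.sigma (fun d => d.1), t (insert (0 : Fin n) (q.1.1.erase q.2)) q.2 := by
    refine Finset.sum_bij'
      (fun p hp => ⟨⟨insert p.2 (p.1.1.erase 0),
        (card_insert_erase (Finset.mem_filter.mp (Finset.mem_sigma.mp hp).1).2
          (Finset.mem_compl.mp (Finset.mem_sigma.mp hp).2)).trans p.1.2⟩, p.2⟩)
      (fun q hq => ⟨⟨insert (0 : Fin n) (q.1.1.erase q.2),
        (card_insert_erase (Finset.mem_sigma.mp hq).2
          (Finset.mem_filter.mp (Finset.mem_sigma.mp hq).1).2).trans q.1.2⟩, q.2⟩)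
      ?_ ?_ ?_ ?_ ?_
    · intro p hp
      obtain ⟨hp1, hp2⟩ := Finset.mem_sigma.mp hp
      have h0p : (0 : Fin n) ∈ p.1.1 := (Finset.mem_filter.mp hp1).2
      have hpn : p.2 ∉ p.1.1 := Finset.mem_compl.mp hp2
      refine Finset.mem_sigma.mpr ⟨Finset.mem_filter.mpr ⟨Finset.mem_univ _, ?_⟩,
        Finset.mem_insert_self _ _⟩
      intro hmem
      rcases Finset.mem_insert.mp hmem with h | h
      · exact hpn (h ▸ h0p)
      · exact (Finset.mem_erase.mp h).1 rfl
    · intro q hq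
      obtain ⟨hq1, hq2⟩ := Finset.mem_sigma.mp hq
      have h0q : (0 : Fin n) ∉ q.1.1 := (Finset.mem_filter.mp hq1).2
      refine Finset.mem_sigma.mpr ⟨Finset.mem_filter.mpr ⟨Finset.mem_univ _,
        Finset.mem_insert_self _ _⟩, ?_⟩
      rw [Finset.mem_compl]
      intro hmem
      rcases Finset.mem_insert.mp hmem with h | h
      · exact h0q (h ▸ hq2)
      · exact (Finset.mem_erase.mp h).1 rfl
    · intro p hp
      obtain ⟨hp1, hp2⟩ := Finset.mem_sigma.mp hp
      have h0p : (0 : Fin n) ∈ p.1.1 := (Finset.mem_filter.mp hp1).2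
      have hpn : p.2 ∉ p.1.1 := Finset.mem_compl.mp hp2
      refine sigma_ext _ _ _ _ ?_ rfl
      apply Subtype.ext
      show insert (0 : Fin n) ((insert p.2 (p.1.1.erase 0)).erase p.2) = p.1.1
      rw [Finset.erase_insert (fun h => hpn (Finset.mem_of_mem_erase h)),
        Finset.insert_erase h0p]
    · intro q hq
      obtain ⟨hq1, hq2⟩ := Finset.mem_sigma.mp hq
      have h0q : (0 : Fin n) ∉ q.1.1 := (Finset.mem_filter.mp hq1).2
      refine sigma_ext _ _ _ _ ?_ rfl
      apply Subtype.ext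
      show insert q.2 ((insert (0 : Fin n) (q.1.1.erase q.2)).erase 0) = q.1.1
      rw [Finset.erase_insert (fun h => h0q (Finset.mem_of_mem_erase h)),
        Finset.insert_erase hq2]
    · intro p hp
      obtain ⟨hp1, hp2⟩ := Finset.mem_sigma.mp hp
      have h0p : (0 : Fin n) ∈ p.1.1 := (Finset.mem_filter.mp hp1).2
      have hpn : p.2 ∉ p.1.1 := Finset.mem_compl.mp hp2
      have : insert (0 : Fin n) ((insert p.2 (p.1.1.erase 0)).erase p.2) = p.1.1 := by
        rw [Finset.erase_insert (fun h => hpn (Finset.mem_of_mem_erase h)),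
          Finset.insert_erase h0p]
      rw [this]
  -- Step 3: evaluate the inner sum for each d in B
  have step3 : ∀ d ∈ B, ∑ i ∈ d.1, t (insert (0 : Fin n) (d.1.erase i)) i = -u d.1 := by
    intro d hd
    have h0d : (0 : Fin n) ∉ d.1 := (Finset.mem_filter.mp hd).2
    rw [sum_over_finset d.1 d.2]
    have perterm : ∀ α : Fin (k' + 1),
        t (insert (0 : Fin n) (d.1.erase (d.1.orderEmbOfFin d.2 α))) (d.1.orderEmbOfFin d.2 α)
          = -((-1) ^ (∑ x ∈ d.1, (x : ℕ)) *
              ((-1) ^ (α : ℕ) * (X.submatrix (⇑(d.1.orderEmbOfFin d.2)) id).det)) := by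
      intro α
      have hiα : d.1.orderEmbOfFin d.2 α ∈ d.1 := Finset.orderEmbOfFin_mem _ _ _
      have hcα : (insert (0 : Fin n) (d.1.erase (d.1.orderEmbOfFin d.2 α))).card = k' + 1 :=
        (card_insert_erase hiα h0d).trans d.2
      have hSc := sum_val_insert_zero_erase h0d hiα
      simp only [t]
      rw [embF_eq hcα, det_updateRow_eq X d.1 d.2 h0d α hcα]
      rw [← hSc]
      generalize (∑ x ∈ insert (0 : Fin n) (d.1.erase (d.1.orderEmbOfFin d.2 α)), (x : ℕ)) = Sc
      generalize ((d.1.orderEmbOfFin d.2 α : Fin n) : ℕ) = iv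
      rw [pow_add, pow_succ]
      ring
    rw [Finset.sum_congr rfl fun α _ => perterm α]
    rw [Finset.sum_neg_distrib, ← Finset.mul_sum, ← Finset.sum_mul,
      sum_neg_one_pow_odd hodd, one_mul]
    simp only [u]
    rw [embF_eq d.2]
  calc ∑ c ∈ A, u c.1 + ∑ d ∈ B, u d.1
      = (∑ c ∈ A, ∑ i ∈ (c.1)ᶜ, t c.1 i) + ∑ d ∈ B, u d.1 := by
        rw [Finset.sum_congr rfl expand]
    _ = (∑ p ∈ A.sigma (fun c => (c.1)ᶜ), t p.1.1 p.2) + ∑ d ∈ B, u d.1 := by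
        rw [Finset.sum_sigma']
    _ = (∑ q ∈ B.sigma (fun d => d.1), t (insert (0 : Fin n) (q.1.1.erase q.2)) q.2)
          + ∑ d ∈ B, u d.1 := by rw [hbij]
    _ = (∑ d ∈ B, ∑ i ∈ d.1, t (insert (0 : Fin n) (d.1.erase i)) i) + ∑ d ∈ B, u d.1 := by
        rw [Finset.sum_sigma']
    _ = (∑ d ∈ B, -u d.1) + ∑ d ∈ B, u d.1 := by rw [Finset.sum_congr rfl step3]
    _ = 0 := by rw [Finset.sum_neg_distrib, neg_add_cancel]

theorem cullisDet_eq_zero {F : Type*} [CommRing F] {n k : ℕ} (hodd : Odd k)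
    (hk : 1 ≤ k) (hkn : k ≤ n) (X : Matrix (Fin n) (Fin k) F)
    (hX : ∑ i : Fin n, ((-1 : F) ^ ((i : ℕ) + 1)) • X i = 0) : cullisDet X = 0 := by
  classical
  obtain ⟨k', rfl⟩ : ∃ k'', k = k'' + 1 := ⟨k - 1, by omega⟩
  haveI : NeZero n := ⟨by omega⟩
  have hrow : X 0 = ∑ i ∈ Finset.univ.erase (0 : Fin n), ((-1 : F) ^ ((i : ℕ) + 1)) • X i := by
    rw [← Finset.add_sum_erase _ _ (Finset.mem_univ (0 : Fin n))] at hX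
    simp only [Fin.val_zero, zero_add, pow_one, neg_one_smul] at hX
    exact neg_add_eq_zero.mp hX
  have key := key_sum (F := F) hodd X hrow
  unfold cullisDet
  have congr1 : ∀ c : {s : Finset (Fin n) // s.card = k' + 1},
      (-1 : F) ^ (∑ α : Fin (k' + 1), ((c.1.orderEmbOfFin c.2 α : ℕ) - (α : ℕ))) *
        (X.submatrix (⇑(c.1.orderEmbOfFin c.2)) id).det
      = (-1) ^ (∑ α : Fin (k' + 1), (α : ℕ)) *
          ((-1) ^ (∑ x ∈ c.1, (x : ℕ)) * (X.submatrix (⇑(c.1.orderEmbOfFin c.2)) id).det) := by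
    intro c
    rw [sign_eq c.1 c.2]
    ring
  rw [Finset.sum_congr rfl fun c _ => congr1 c, ← Finset.mul_sum, key, mul_zero]

end CullisAux

/-- For k odd and n ≥ k, the subspace V of n × k matrices whose alternating row sum
Σ_i (−1)^i X[i] vanishes has codimension k (i.e. dim V = nk − k), and the Cullis
determinant vanishes on every element of V. -/
theorem altRowSum_space_annihilates_cullisDet {F : Type*} [Field F] {n k : ℕ}
    (hodd : Odd k) (hk : 1 ≤ k) (hkn : k ≤ n)
    (V : Submodule F (Matrix (Fin n) (Fin k) F))
    (hV : ∀ X : Matrix (Fin n) (Fin k) F,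
      X ∈ V ↔ ∑ i : Fin n, ((-1 : F) ^ ((i : ℕ) + 1)) • X i = 0) :
    Module.finrank F V = n * k - k ∧ ∀ X ∈ V, cullisDet X = 0 := by
  classical
  haveI : NeZero n := ⟨by omega⟩
  constructor
  · -- finrank computation
    let L : Matrix (Fin n) (Fin k) F →ₗ[F] (Fin k → F) :=
      { toFun := fun X => ∑ i : Fin n, ((-1 : F) ^ ((i : ℕ) + 1)) • X i
        map_add' := by
          intro X Y
          rw [← Finset.sum_add_distrib]
          refine Finset.sum_congr rfl fun i _ => ?_
          show ((-1 : F) ^ ((i : ℕ) + 1)) • (X i + Y i) = _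
          rw [smul_add]
        map_smul' := by
          intro a X
          simp only [RingHom.id_apply]
          rw [Finset.smul_sum]
          refine Finset.sum_congr rfl fun i _ => ?_
          show ((-1 : F) ^ ((i : ℕ) + 1)) • (a • X i) = a • (((-1 : F) ^ ((i : ℕ) + 1)) • X i)
          rw [smul_comm] }
    have hVk : V = LinearMap.ker L := by
      ext X
      rw [hV X, LinearMap.mem_ker]
      constructor <;> intro h <;> exact h
    have hsurj : Function.Surjective L := by
      intro v
      refine ⟨Matrix.of fun i j => if i = (0 : Fin n) then -v j else 0, ?_⟩
      show ∑ i : Fin n, ((-1 : F) ^ ((i : ℕ) + 1)) •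
        (fun j => if i = (0 : Fin n) then -v j else 0) = v
      rw [Finset.sum_eq_single (0 : Fin n)]
      · funext j
        simp [Fin.val_zero]
      · intro b _ hb
        funext j
        simp [hb]
      · simp
    have h1 := LinearMap.finrank_range_add_finrank_ker L
    rw [LinearMap.range_eq_top.mpr hsurj, finrank_top] at h1
    have h2 : Module.finrank F (Matrix (Fin n) (Fin k) F) = n * k := by
      simp [Module.finrank_matrix]
    have h3 : Module.finrank F (Fin k → F) = k := by
      rw [Module.finrank_pi]
      simp
    rw [hVk]
    rw [h2, h3] at h1
    omega
  · intro X hX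
    exact CullisAux.cullisDet_eq_zero hodd hk hkn X ((hV X).mp hX)
end
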